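/- arXiv:1410.4072 — 6 statements merged into one kernel-verified Lean document; each statement's English description precedes it below -/
import Mathlib

section
/- The map β ↦ β·C(β) tends to +∞ as β → +∞. -/
open MeasureTheory Real Filter Set

/-!
On `[0, M/β]` the rate `b(aβy)/(1-y)` is at most `2 b(aM)`, so there the integrand of `C(β)` is at
least `exp (-2 M b(aM) / β)`, and `β C(β) ≥ M exp (-2 M b(aM) / β) → M` for every `M > 0`.
This needs `C(β)` to be a genuine integral rather than the junk value `0`: for `y ≥ 1/2` the rate
is at least `c/(1-y)` with `c = b(aβ/2) > 0`, so the integrand is `O((1-x)^(c-1))` near `x = 1`.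
-/

/-- `C(β) = ∫₀¹ (1-x)⁻¹ exp(-∫₀ˣ b(aβy)/(1-y) dy) dx`. -/
noncomputable def Cfun (a : ℝ) (b : ℝ → ℝ) (β : ℝ) : ℝ :=
  ∫ x in (0:ℝ)..1, (1 - x)⁻¹ * Real.exp (-∫ y in (0:ℝ)..x, b (a * β * y) / (1 - y))

open Topology

noncomputable def cIntegrand (g : ℝ → ℝ) (x : ℝ) : ℝ :=
  (1 - x)⁻¹ * exp (-∫ y in (0:ℝ)..x, g y)

section cIntegrand

variable {g : ℝ → ℝ} {s t x c B : ℝ}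

lemma cIntegrand_nonneg (hx : x ≤ 1) : 0 ≤ cIntegrand g x :=
  mul_nonneg (inv_nonneg.2 (sub_nonneg.2 hx)) (exp_pos _).le

lemma ContinuousOn.intervalIntegrable_of_lt_one (hg : ContinuousOn g (Iio 1)) {u v : ℝ}
    (hu : u < 1) (hv : v < 1) : IntervalIntegrable g volume u v :=
  (hg.mono fun _ hy => lt_of_le_of_lt hy.2 (max_lt hu hv)).intervalIntegrable

lemma hasDerivAt_primitive_of_lt_one (hg : ContinuousOn g (Iio 1)) (hx : x < 1) :
    HasDerivAt (fun u => ∫ y in (0:ℝ)..u, g y) (g x) x :=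
  intervalIntegral.integral_hasDerivAt_right (hg.intervalIntegrable_of_lt_one one_pos hx)
    (hg.stronglyMeasurableAtFilter isOpen_Iio x hx) (hg.continuousAt (Iio_mem_nhds hx))

lemma continuousOn_inv_one_sub : ContinuousOn (fun y : ℝ => (1 - y)⁻¹) (Iio 1) :=
  (continuousOn_const.sub continuousOn_id).inv₀ fun _ hy => (sub_pos.2 hy).ne'

lemma continuousOn_cIntegrand (hg : ContinuousOn g (Iio 1)) :
    ContinuousOn (cIntegrand g) (Iio 1) :=
  continuousOn_inv_one_sub.mul fun _ hx =>
    (hasDerivAt_primitive_of_lt_one hg hx).continuousAt.neg.rexp.continuousWithinAt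

lemma integral_inv_one_sub (hs : s < 1) (hx : x < 1) :
    ∫ y in s..x, (1 - y)⁻¹ = log (1 - s) - log (1 - x) := by
  rw [intervalIntegral.integral_comp_sub_left (fun y => y⁻¹),
    integral_inv_of_pos (sub_pos.2 hx) (sub_pos.2 hs),
    log_div (sub_pos.2 hs).ne' (sub_pos.2 hx).ne']

lemma cIntegrand_le_rpow (hg : ContinuousOn g (Iio 1)) (hgc : ∀ y ∈ Ico s 1, c / (1 - y) ≤ g y)
    (hsx : s ≤ x) (hx : x < 1) :
    cIntegrand g x ≤ exp (-(c * log (1 - s)) - ∫ y in (0:ℝ)..s, g y) * (1 - x) ^ (c - 1) := by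
  have hs : s < 1 := hsx.trans_lt hx
  have hsplit : (∫ y in (0:ℝ)..s, g y) + ∫ y in s..x, g y = ∫ y in (0:ℝ)..x, g y :=
    intervalIntegral.integral_add_adjacent_intervals
      (hg.intervalIntegrable_of_lt_one one_pos hs) (hg.intervalIntegrable_of_lt_one hs hx)
  have hlog : c * (log (1 - s) - log (1 - x)) ≤ ∫ y in s..x, g y := by
    rw [← integral_inv_one_sub hs hx, ← intervalIntegral.integral_const_mul]
    exact intervalIntegral.integral_mono_on hsx
      ((continuousOn_const.mul continuousOn_inv_one_sub).intervalIntegrable_of_lt_one hs hx)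
      (hg.intervalIntegrable_of_lt_one hs hx)
      fun y hy => div_eq_mul_inv c (1 - y) ▸ hgc y ⟨hy.1, hy.2.trans_lt hx⟩
  have h1x : 0 < 1 - x := sub_pos.2 hx
  rw [cIntegrand, rpow_def_of_pos h1x, ← exp_log (inv_pos.2 h1x), log_inv, ← exp_add, ← exp_add]
  exact exp_le_exp.2 (by linarith)

lemma intervalIntegrable_cIntegrand (hg : ContinuousOn g (Iio 1)) (hc : 0 < c) (hs : s < 1)
    (hgc : ∀ y ∈ Ico s 1, c / (1 - y) ≤ g y) :
    IntervalIntegrable (cIntegrand g) volume 0 1 := by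
  refine ((continuousOn_cIntegrand hg).intervalIntegrable_of_lt_one one_pos hs).trans ?_
  have hmaj : IntervalIntegrable (fun x => exp (-(c * log (1 - s)) - ∫ y in (0:ℝ)..s, g y) *
      (1 - x) ^ (c - 1)) volume s 1 := by
    have := (intervalIntegral.intervalIntegrable_rpow' (a := 1 - s) (b := 0)
      (by linarith : (-1:ℝ) < c - 1)).comp_sub_left 1
    simp only [sub_sub_cancel, sub_zero] at this
    exact this.const_mul _
  rw [intervalIntegrable_iff_integrableOn_Ioo_of_le hs.le] at hmaj ⊢
  refine hmaj.mono' (((continuousOn_cIntegrand hg).mono fun x hx => hx.2).aestronglyMeasurable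
    measurableSet_Ioo) ((ae_restrict_mem measurableSet_Ioo).mono fun x hx => ?_)
  rw [norm_of_nonneg (cIntegrand_nonneg hx.2.le)]
  exact cIntegrand_le_rpow hg hgc hx.1.le hx.2

lemma mul_exp_neg_le_integral_cIntegrand (hint : IntervalIntegrable (cIntegrand g) volume 0 1)
    (hg : IntervalIntegrable g volume 0 t) (ht0 : 0 ≤ t) (ht1 : t < 1) (hB : 0 ≤ B)
    (hgB : ∀ y ∈ Icc 0 t, g y ≤ B) :
    t * exp (-(B * t)) ≤ ∫ x in (0:ℝ)..1, cIntegrand g x := by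
  have hlow : ∀ x ∈ Icc 0 t, exp (-(B * t)) ≤ cIntegrand g x := by
    rintro x ⟨hx0, hxt⟩
    have hF : ∫ y in (0:ℝ)..x, g y ≤ x * B := by
      simpa using intervalIntegral.integral_mono_on hx0
        (hg.mono_set (uIcc_subset_uIcc left_mem_uIcc (by rw [uIcc_of_le ht0]; exact ⟨hx0, hxt⟩)))
        intervalIntegrable_const fun y hy => hgB y ⟨hy.1, hy.2.trans hxt⟩
    have hinv : 1 ≤ (1 - x)⁻¹ := (one_le_inv₀ (by linarith)).2 (by linarith)
    calc exp (-(B * t)) ≤ 1 * exp (-∫ y in (0:ℝ)..x, g y) := by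
          rw [one_mul]; exact exp_le_exp.2 (by linarith [mul_le_mul_of_nonneg_right hxt hB])
      _ ≤ cIntegrand g x := mul_le_mul_of_nonneg_right hinv (exp_pos _).le
  have hint0 : IntervalIntegrable (cIntegrand g) volume 0 t :=
    hint.mono_set (uIcc_subset_uIcc_left (by rw [uIcc_of_le zero_le_one]; exact ⟨ht0, ht1.le⟩))
  have hint1 : IntervalIntegrable (cIntegrand g) volume t 1 :=
    hint.mono_set (uIcc_subset_uIcc_right (by rw [uIcc_of_le zero_le_one]; exact ⟨ht0, ht1.le⟩))
  calc t * exp (-(B * t)) = ∫ _ in (0:ℝ)..t, exp (-(B * t)) := by simp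
    _ ≤ ∫ x in (0:ℝ)..t, cIntegrand g x :=
      intervalIntegral.integral_mono_on ht0 intervalIntegrable_const hint0 hlow
    _ ≤ (∫ x in (0:ℝ)..t, cIntegrand g x) + ∫ x in t..1, cIntegrand g x :=
      le_add_of_nonneg_right (intervalIntegral.integral_nonneg ht1.le fun x hx =>
        cIntegrand_nonneg hx.2)
    _ = ∫ x in (0:ℝ)..1, cIntegrand g x :=
      intervalIntegral.integral_add_adjacent_intervals hint0 hint1

end cIntegrand

noncomputable def cRate (a : ℝ) (b : ℝ → ℝ) (β y : ℝ) : ℝ :=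
  b (a * β * y) / (1 - y)

section cRate

variable {a β : ℝ} {b : ℝ → ℝ}

lemma Cfun_eq_integral_cIntegrand : Cfun a b β = ∫ x in (0:ℝ)..1, cIntegrand (cRate a b β) x :=
  rfl

lemma continuousOn_cRate (hb : Continuous b) : ContinuousOn (cRate a b β) (Iio 1) :=
  (hb.comp (continuous_const.mul continuous_id)).continuousOn.div
    (continuous_const.sub continuous_id).continuousOn fun _ hy => (sub_pos.2 hy).ne'

lemma intervalIntegrable_cIntegrand_cRate (ha : 0 < a) (hβ : 0 < β) (hb_cont : Continuous b)
    (hb_mono : MonotoneOn b (Ici 0)) (hb_pos : ∀ x > (0:ℝ), 0 < b x) :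
    IntervalIntegrable (cIntegrand (cRate a b β)) volume 0 1 := by
  have haβ : 0 < a * β := mul_pos ha hβ
  refine intervalIntegrable_cIntegrand (continuousOn_cRate hb_cont)
    (hb_pos (a * β * (1 / 2)) (by positivity)) (by norm_num : (1 / 2 : ℝ) < 1) fun y hy => ?_
  have hby : b (a * β * (1 / 2)) ≤ b (a * β * y) :=
    hb_mono (by rw [mem_Ici]; positivity) (by rw [mem_Ici]; nlinarith [hy.1]) (by nlinarith [hy.1])
  exact div_le_div_of_nonneg_right hby (sub_pos.2 hy.2).le

lemma mul_exp_neg_le_Cfun (ha : 0 < a) (hβ : 0 < β) (hb_cont : Continuous b)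
    (hb_mono : MonotoneOn b (Ici 0)) (hb_pos : ∀ x > (0:ℝ), 0 < b x) {t : ℝ} (ht0 : 0 < t)
    (ht : t ≤ 1 / 2) : t * exp (-(2 * b (a * β * t) * t)) ≤ Cfun a b β := by
  have haβ : 0 < a * β := mul_pos ha hβ
  have hbt : 0 < b (a * β * t) := hb_pos _ (by positivity)
  rw [Cfun_eq_integral_cIntegrand]
  refine mul_exp_neg_le_integral_cIntegrand
    (intervalIntegrable_cIntegrand_cRate ha hβ hb_cont hb_mono hb_pos)
    ((continuousOn_cRate hb_cont).intervalIntegrable_of_lt_one one_pos (by linarith))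
    ht0.le (by linarith) (by positivity) fun y hy => ?_
  have hby : b (a * β * y) ≤ b (a * β * t) := hb_mono (by rw [mem_Ici]; nlinarith [hy.1])
    (by rw [mem_Ici]; positivity) (by nlinarith [hy.2])
  rw [cRate, div_le_iff₀ (by linarith [hy.2])]
  nlinarith [hy.2]

end cRate

theorem betaC_tendsto_atTop_general
    (a : ℝ) (ha : 0 < a) (b : ℝ → ℝ)
    (hb_cont : Continuous b) (hb_mono : MonotoneOn b (Set.Ici 0))
    (hb_pos : ∀ x > (0:ℝ), 0 < b x) :
    Tendsto (fun β => β * Cfun a b β) atTop atTop := by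
  refine tendsto_atTop.2 fun K => ?_
  set M := max K 0 + 1
  have hKM : K < M := by linarith [le_max_left K 0]
  have hM : 0 < M := by positivity
  have hlim : Tendsto (fun β => M * exp (-(2 * b (a * M) * (M / β)))) atTop (𝓝 M) := by
    simpa using tendsto_const_nhds.mul ((continuous_exp.tendsto _).comp
      ((tendsto_const_nhds.div_atTop tendsto_id).const_mul (2 * b (a * M))).neg)
  filter_upwards [hlim.eventually (eventually_gt_nhds hKM), eventually_ge_atTop (2 * M)]
    with β hK hβ
  have hβ0 : 0 < β := by linarith
  have hC := mul_exp_neg_le_Cfun ha hβ0 hb_cont hb_mono hb_pos (div_pos hM hβ0)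
    (by rw [div_le_iff₀ hβ0]; linarith)
  rw [show a * β * (M / β) = a * M by field_simp] at hC
  calc K ≤ M * exp (-(2 * b (a * M) * (M / β))) := hK.le
    _ = β * (M / β * exp (-(2 * b (a * M) * (M / β)))) := by field_simp
    _ ≤ β * Cfun a b β := mul_le_mul_of_nonneg_left hC hβ0.le

/-- `β C(β) → ∞` as `β → ∞`. -/
theorem betaC_tendsto_atTop
    (a : ℝ) (ha : 0 < a) (b : ℝ → ℝ)
    (hb_cont : Continuous b) (hb_mono : MonotoneOn b (Set.Ici 0))
    (hb0 : 0 ≤ b 0) (hb_pos : ∀ x > (0:ℝ), 0 < b x) :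
    Tendsto (fun β => β * Cfun a b β) atTop atTop :=
  betaC_tendsto_atTop_general a ha b hb_cont hb_mono hb_pos
end

section
/- Suppose that b(x)/x → 0 as x → 0⁺ and that there exists β₀ > 0 with β₀·C(β₀) < 1. Then there exists β > 0 satisfying the fixed point equation β·C(β) = 1. -/
/-!
Write `I_β(x) = ∫₀ˣ b(aβy)/(1-y) dy`. Since `b` is nondecreasing, `I_β(x) ≤ -b(aβ) log(1-x)`, so
the integrand of `C(β)` is at least `(1-x)^(b(aβ)-1)` and `C(β) ≥ 1/b(aβ)`; as `b(aβ)/β → 0`, this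
gives `β C(β) > 1` for small `β > 0`. Bounding `I_β(x)` from below on `[1/2, x]` dominates the
integrand by `2^c (1-x)^(c-1)`, with `c > 0` uniform for `β` near any `β₀ > 0`, so `C` is continuous
on `(0, ∞)` and the intermediate value theorem finds a root of `β C(β) = 1` between a small `β`
and a `β₀` with `β₀ C(β₀) < 1`.
-/

open MeasureTheory Real Filter Set

section DivOneSub

variable {h : ℝ → ℝ} {c s x : ℝ}

lemma integral_const_div_one_sub (hs : s < 1) (hx : x < 1) :
    ∫ y in s..x, c / (1 - y) = c * log ((1 - s) / (1 - x)) := by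
  simp_rw [div_eq_mul_inv c]
  rw [intervalIntegral.integral_const_mul,
    intervalIntegral.integral_comp_sub_left (fun u => u⁻¹), integral_inv fun h0 => ?_]
  rcases mem_uIcc.1 h0 with h0 | h0 <;> linarith [h0.1]

lemma continuousOn_div_one_sub (hh : Continuous h) :
    ContinuousOn (fun y => h y / (1 - y)) (Iio 1) :=
  hh.continuousOn.div (continuousOn_const.sub continuousOn_id) fun _ hy => (sub_pos.2 hy).ne'

lemma intervalIntegrable_div_one_sub (hh : Continuous h) (hs : s < 1) (hx : x < 1) :
    IntervalIntegrable (fun y => h y / (1 - y)) volume s x :=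
  ((continuousOn_div_one_sub hh).mono fun _ hy =>
    hy.2.trans_lt (max_lt hs hx)).intervalIntegrable

lemma continuousOn_integral_div_one_sub (hh : Continuous h) :
    ContinuousOn (fun x => ∫ y in (0:ℝ)..x, h y / (1 - y)) (Iio 1) := fun x hx =>
  (intervalIntegral.integral_hasDerivAt_right (intervalIntegrable_div_one_sub hh one_pos hx)
    ((continuousOn_div_one_sub hh).stronglyMeasurableAtFilter isOpen_Iio x hx)
    ((continuousOn_div_one_sub hh).continuousAt (isOpen_Iio.mem_nhds hx))).continuousAt
    |>.continuousWithinAt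

lemma continuous_integral_div_one_sub {g : ℝ → ℝ → ℝ} (hg : Continuous (Function.uncurry g))
    (hx0 : 0 ≤ x) (hx1 : x < 1) :
    Continuous fun β => ∫ y in (0:ℝ)..x, g β y / (1 - y) := by
  -- Beyond `x` the denominator may vanish; freezing it there makes the integrand jointly
  -- continuous without changing the integral.
  have hpos : ∀ y, 0 < 1 - min y x := fun y => sub_pos.2 ((min_le_right y x).trans_lt hx1)
  have hcont : Continuous (Function.uncurry fun β y => g β y / (1 - min y x)) :=
    hg.div (by fun_prop) fun p => (hpos p.2).ne'
  refine (intervalIntegral.continuous_parametric_intervalIntegral_of_continuous' hcont 0 x).congr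
    fun β => intervalIntegral.integral_congr fun y hy => ?_
  rw [uIcc_of_le hx0] at hy
  simp only [min_eq_left hy.2]

lemma one_sub_rpow_le_exp_neg_integral (hh : Continuous h) (hmono : MonotoneOn h (Icc 0 1))
    (hx0 : 0 ≤ x) (hx1 : x < 1) :
    (1 - x) ^ h 1 ≤ exp (-∫ y in (0:ℝ)..x, h y / (1 - y)) := by
  have hle : ∫ y in (0:ℝ)..x, h y / (1 - y) ≤ ∫ y in (0:ℝ)..x, h 1 / (1 - y) :=
    intervalIntegral.integral_mono_on hx0 (intervalIntegrable_div_one_sub hh one_pos hx1)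
      (intervalIntegrable_div_one_sub continuous_const one_pos hx1) fun y hy =>
      div_le_div_of_nonneg_right (hmono ⟨hy.1, by linarith [hy.2]⟩ ⟨zero_le_one, le_rfl⟩
        (by linarith [hy.2])) (by linarith [hy.2])
  rw [integral_const_div_one_sub one_pos hx1, sub_zero,
    log_div one_ne_zero (by linarith), log_one] at hle
  rw [rpow_def_of_pos (by linarith)]
  exact exp_le_exp.2 (by linarith)

lemma exp_neg_integral_le_rpow (hh : Continuous h) (hnn : ∀ y ∈ Ico 0 1, 0 ≤ h y) (hc : 0 ≤ c)
    (hch : ∀ y ∈ Ico (1 / 2) 1, c ≤ h y) (hx0 : 0 ≤ x) (hx1 : x < 1) :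
    exp (-∫ y in (0:ℝ)..x, h y / (1 - y)) ≤ (2 * (1 - x)) ^ c := by
  have hnonneg : ∀ s ∈ Icc 0 x, 0 ≤ ∫ y in (0:ℝ)..s, h y / (1 - y) := fun s hs =>
    intervalIntegral.integral_nonneg hs.1 fun y hy =>
      div_nonneg (hnn y ⟨hy.1, by linarith [hy.2, hs.2]⟩) (by linarith [hy.2, hs.2])
  rcases le_or_gt x (1 / 2) with hx | hx
  · calc exp (-∫ y in (0:ℝ)..x, h y / (1 - y)) ≤ 1 :=
          exp_le_one_iff.2 (neg_nonpos.2 (hnonneg x ⟨hx0, le_rfl⟩))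
      _ ≤ (2 * (1 - x)) ^ c := one_le_rpow (by linarith) hc
  have htail : c * log ((1 - 1 / 2) / (1 - x)) ≤ ∫ y in (1 / 2 : ℝ)..x, h y / (1 - y) := by
    rw [← integral_const_div_one_sub (by norm_num) hx1]
    exact intervalIntegral.integral_mono_on hx.le
      (intervalIntegrable_div_one_sub continuous_const (by norm_num) hx1)
      (intervalIntegrable_div_one_sub hh (by norm_num) hx1) fun y hy =>
      div_le_div_of_nonneg_right (hch y ⟨hy.1, by linarith [hy.2]⟩) (by linarith [hy.2])
  have hsplit := intervalIntegral.integral_add_adjacent_intervals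
    (intervalIntegrable_div_one_sub hh one_pos (by norm_num : (1 / 2 : ℝ) < 1))
    (intervalIntegrable_div_one_sub hh (by norm_num) hx1)
  have hlog : log ((1 - 1 / 2) / (1 - x)) = -log (2 * (1 - x)) := by
    rw [← log_inv]; congr 1; field_simp; ring
  have hbound : -∫ y in (0:ℝ)..x, h y / (1 - y) ≤ log (2 * (1 - x)) * c := by
    rw [← hsplit]
    rw [hlog] at htail
    linarith [hnonneg (1 / 2) ⟨by norm_num, hx.le⟩]
  rw [rpow_def_of_pos (by linarith)]
  exact exp_le_exp.2 hbound

lemma intervalIntegrable_one_sub_rpow (hc : 0 < c) :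
    IntervalIntegrable (fun x => (1 - x) ^ (c - 1)) volume 0 1 := by
  simpa using ((intervalIntegral.intervalIntegrable_rpow' (by linarith : -1 < c - 1)).comp_sub_left
    1 (a := 0) (b := 1)).symm

lemma integral_one_sub_rpow (hc : 0 < c) : ∫ x in (0:ℝ)..1, (1 - x) ^ (c - 1) = 1 / c := by
  rw [intervalIntegral.integral_comp_sub_left (fun u => u ^ (c - 1)),
    integral_rpow (Or.inl (by linarith))]
  simp [zero_rpow hc.ne']

lemma aestronglyMeasurable_inv_one_sub_mul_exp (hh : Continuous h) :
    AEStronglyMeasurable (fun x => (1 - x)⁻¹ * exp (-∫ y in (0:ℝ)..x, h y / (1 - y)))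
      (volume.restrict (Ioc 0 1)) := by
  have hinv : ContinuousOn (fun x : ℝ => (1 - x)⁻¹) (Iio 1) :=
    (continuousOn_const.sub continuousOn_id).inv₀ fun _ hx => (sub_pos.2 hx).ne'
  have hcont : ContinuousOn (fun x => (1 - x)⁻¹ * exp (-∫ y in (0:ℝ)..x, h y / (1 - y))) (Iio 1) :=
    hinv.mul (continuous_exp.comp_continuousOn (continuousOn_integral_div_one_sub hh).neg)
  refine (hcont.aestronglyMeasurable (μ := volume) measurableSet_Iio).mono_measure ?_
  rw [Measure.restrict_congr_set Iio_ae_eq_Iic]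
  exact Measure.restrict_mono Ioc_subset_Iic_self le_rfl

lemma norm_inv_one_sub_mul_exp_le (hh : Continuous h) (hnn : ∀ y ∈ Ico 0 1, 0 ≤ h y) (hc : 0 ≤ c)
    (hch : ∀ y ∈ Ico (1 / 2) 1, c ≤ h y) (hx0 : 0 ≤ x) (hx1 : x < 1) :
    ‖(1 - x)⁻¹ * exp (-∫ y in (0:ℝ)..x, h y / (1 - y))‖ ≤ 2 ^ c * (1 - x) ^ (c - 1) := by
  have hx : 0 < 1 - x := sub_pos.2 hx1
  rw [norm_of_nonneg (by positivity), rpow_sub_one hx.ne', mul_div_assoc',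
    ← mul_rpow zero_le_two hx.le, div_eq_inv_mul]
  exact mul_le_mul_of_nonneg_left (exp_neg_integral_le_rpow hh hnn hc hch hx0 hx1) (by positivity)

lemma intervalIntegrable_inv_one_sub_mul_exp (hh : Continuous h) (hnn : ∀ y ∈ Ico 0 1, 0 ≤ h y)
    (hc : 0 < c) (hch : ∀ y ∈ Ico (1 / 2) 1, c ≤ h y) :
    IntervalIntegrable (fun x => (1 - x)⁻¹ * exp (-∫ y in (0:ℝ)..x, h y / (1 - y))) volume 0 1 := by
  refine ((intervalIntegrable_one_sub_rpow hc).const_mul (2 ^ c)).mono_fun' ?_ ?_ <;>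
    rw [uIoc_of_le zero_le_one]
  · exact aestronglyMeasurable_inv_one_sub_mul_exp hh
  filter_upwards [ae_restrict_mem measurableSet_Ioc, ae_restrict_of_ae (Measure.ae_ne volume 1)]
    with x hx hx1
  exact norm_inv_one_sub_mul_exp_le hh hnn hc.le hch hx.1.le (lt_of_le_of_ne hx.2 hx1)

lemma one_div_le_integral_inv_one_sub_mul_exp (hh : Continuous h) (hmono : MonotoneOn h (Icc 0 1))
    (h0 : 0 ≤ h 0) (hhalf : 0 < h (1 / 2)) :
    1 / h 1 ≤ ∫ x in (0:ℝ)..1, (1 - x)⁻¹ * exp (-∫ y in (0:ℝ)..x, h y / (1 - y)) := by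
  have hhalf_mem : (1 / 2 : ℝ) ∈ Icc 0 1 := ⟨by norm_num, by norm_num⟩
  have h1 : 0 < h 1 := hhalf.trans_le (hmono hhalf_mem ⟨zero_le_one, le_rfl⟩ (by norm_num))
  rw [← integral_one_sub_rpow h1]
  refine intervalIntegral.integral_mono_on_of_le_Ioo zero_le_one
    (intervalIntegrable_one_sub_rpow h1)
    (intervalIntegrable_inv_one_sub_mul_exp hh
      (fun y hy => h0.trans (hmono ⟨le_rfl, zero_le_one⟩ (Ico_subset_Icc_self hy) hy.1)) hhalf
      fun y hy => hmono hhalf_mem (Ico_subset_Icc_self ⟨by linarith [hy.1], hy.2⟩) hy.1)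
    fun x hx => ?_
  rw [rpow_sub_one (sub_pos.2 hx.2).ne', div_eq_inv_mul]
  exact mul_le_mul_of_nonneg_left (one_sub_rpow_le_exp_neg_integral hh hmono hx.1.le hx.2)
    (inv_nonneg.2 (sub_pos.2 hx.2).le)

end DivOneSub

section Cfun

variable {a : ℝ} {b : ℝ → ℝ}

lemma one_div_le_Cfun (ha : 0 < a) (hb_cont : Continuous b) (hb_mono : MonotoneOn b (Ici 0))
    (hb0 : 0 ≤ b 0) (hb_pos : ∀ x > (0:ℝ), 0 < b x) {β : ℝ} (hβ : 0 < β) :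
    1 / b (a * β) ≤ Cfun a b β := by
  have hmono : MonotoneOn (fun y => b (a * β * y)) (Icc 0 1) :=
    hb_mono.comp ((monotone_mul_left_of_nonneg (by positivity)).monotoneOn _)
      fun y hy => mul_nonneg (by positivity) hy.1
  have h := one_div_le_integral_inv_one_sub_mul_exp (by fun_prop) hmono (by simpa using hb0)
    (hb_pos _ (by positivity))
  rwa [mul_one] at h

lemma continuousOn_Cfun (ha : 0 < a) (hb_cont : Continuous b) (hb_mono : MonotoneOn b (Ici 0))
    (hb0 : 0 ≤ b 0) (hb_pos : ∀ x > (0:ℝ), 0 < b x) : ContinuousOn (Cfun a b) (Ioi 0) := by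
  intro β₀ (hβ₀ : 0 < β₀)
  have hb_nonneg : ∀ t, 0 ≤ t → 0 ≤ b t := fun t ht => hb0.trans (hb_mono self_mem_Ici ht ht)
  -- `c ≤ b (a * β * y)` whenever `β₀ / 2 < β` and `1 / 2 ≤ y`.
  set c := b (a * (β₀ / 2) * (1 / 2))
  have hc : 0 < c := hb_pos _ (by positivity)
  refine (intervalIntegral.continuousAt_of_dominated_interval
    (bound := fun x => 2 ^ c * (1 - x) ^ (c - 1)) ?_ ?_
    ((intervalIntegrable_one_sub_rpow hc).const_mul _) ?_).continuousWithinAt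
  · refine Eventually.of_forall fun β => ?_
    rw [uIoc_of_le zero_le_one]
    exact aestronglyMeasurable_inv_one_sub_mul_exp (by fun_prop)
  · filter_upwards [Ioi_mem_nhds (half_lt_self hβ₀)] with β (hβ : β₀ / 2 < β)
    filter_upwards [Measure.ae_ne volume 1] with x hx1 hx
    rw [uIoc_of_le zero_le_one] at hx
    have hβ0 : 0 < β := by linarith
    refine norm_inv_one_sub_mul_exp_le (by fun_prop)
      (fun y hy => hb_nonneg _ (mul_nonneg (by positivity) hy.1)) hc.le (fun y hy => ?_)
      hx.1.le (lt_of_le_of_ne hx.2 hx1)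
    have hy0 : 0 < y := lt_of_lt_of_le (by norm_num) hy.1
    exact hb_mono (by simp only [mem_Ici]; positivity) (by simp only [mem_Ici]; positivity)
      (by gcongr; exact hy.1)
  · filter_upwards [Measure.ae_ne volume 1] with x hx1 hx
    rw [uIoc_of_le zero_le_one] at hx
    exact (continuous_const.mul (continuous_integral_div_one_sub (g := fun β y => b (a * β * y))
      (by fun_prop) hx.1.le (lt_of_le_of_ne hx.2 hx1)).neg.rexp).continuousAt

lemma eventually_one_lt_mul_Cfun (ha : 0 < a) (hb_cont : Continuous b)
    (hb_mono : MonotoneOn b (Ici 0)) (hb0 : 0 ≤ b 0) (hb_pos : ∀ x > (0:ℝ), 0 < b x)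
    (hslope : Tendsto (fun x => b x / x) (nhdsWithin 0 (Ioi 0)) (nhds 0)) :
    ∀ᶠ β in nhdsWithin 0 (Ioi 0), 1 < β * Cfun a b β := by
  have hsmall : ∀ᶠ β in nhdsWithin 0 (Ioi 0), b (a * β) / (a * β) < 1 / a :=
    eventually_nhdsGT_zero_mul_left ha (hslope.eventually (gt_mem_nhds (by positivity)))
  filter_upwards [hsmall, self_mem_nhdsWithin] with β hβ (hβ0 : 0 < β)
  have hbβ : 0 < b (a * β) := hb_pos _ (by positivity)
  have hlt : b (a * β) < β := by
    rw [div_lt_div_iff₀ (by positivity) ha] at hβ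
    nlinarith
  calc 1 < β * (1 / b (a * β)) := by rw [mul_one_div, one_lt_div hbβ]; exact hlt
    _ ≤ β * Cfun a b β :=
      mul_le_mul_of_nonneg_left (one_div_le_Cfun ha hb_cont hb_mono hb0 hb_pos hβ0) hβ0.le

end Cfun

/-- if `b(x)/x → 0` as `x → 0⁺` and `β₀ C(β₀) < 1` for some
`β₀ > 0`, then the fixed point equation `β C(β) = 1` has a solution `β > 0`. -/
theorem exists_nontrivial_stationary_distribution_of_dip_below_one
    (a : ℝ) (ha : 0 < a) (b : ℝ → ℝ)
    (hb_cont : Continuous b) (hb_mono : MonotoneOn b (Set.Ici 0))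
    (hb0 : 0 ≤ b 0) (hb_pos : ∀ x > (0:ℝ), 0 < b x)
    (hslope : Tendsto (fun x => b x / x) (nhdsWithin 0 (Set.Ioi 0)) (nhds 0))
    (hdip : ∃ β₀ : ℝ, 0 < β₀ ∧ β₀ * Cfun a b β₀ < 1) :
    ∃ β : ℝ, 0 < β ∧ β * Cfun a b β = 1 := by
  obtain ⟨β₀, hβ₀, hdip⟩ := hdip
  obtain ⟨β₁, hβ₁, hβ₁β₀⟩ :=
    ((eventually_one_lt_mul_Cfun ha hb_cont hb_mono hb0 hb_pos hslope).and
      (Ioo_mem_nhdsGT hβ₀)).exists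
  have hcont : ContinuousOn (fun β => β * Cfun a b β) (Icc β₁ β₀) :=
    (continuousOn_id.mul (continuousOn_Cfun ha hb_cont hb_mono hb0 hb_pos)).mono
      fun β hβ => hβ₁β₀.1.trans_le hβ.1
  obtain ⟨β, hβ, hβeq⟩ := intermediate_value_Icc' hβ₁β₀.2.le hcont ⟨hdip.le, hβ₁.le⟩
  exact ⟨β, hβ₁β₀.1.trans_le hβ.1, hβeq⟩
end

section
/- Let b(x) = λx + δ with λ > 0 and δ ≥ 0. Then the map β ↦ β·C(β) is strictly increasing on (0, ∞). -/
open MeasureTheory Real Filter Set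

lemma integral_affine_div_one_sub (c δ : ℝ) {x : ℝ} (hx : x < 1) :
    ∫ y in (0:ℝ)..x, (c * y + δ) / (1 - y) = -(c * x) - (c + δ) * log (1 - x) := by
  have hpos : ∀ y ∈ uIcc 0 x, 0 < 1 - y := fun y hy => by
    linarith [hy.2, max_lt zero_lt_one hx]
  have hderiv : ∀ y ∈ uIcc 0 x,
      HasDerivAt (fun t => -(c * t) - (c + δ) * log (1 - t)) ((c * y + δ) / (1 - y)) y := by
    intro y hy
    have hlog := ((hasDerivAt_id' y).const_sub 1).log (hpos y hy).ne'
    refine (((hasDerivAt_id' y).const_mul c).neg.sub (hlog.const_mul (c + δ))).congr_deriv ?_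
    field_simp [(hpos y hy).ne']
    ring
  have hint : IntervalIntegrable (fun y => (c * y + δ) / (1 - y)) volume 0 x :=
    ContinuousOn.intervalIntegrable (by fun_prop (disch := exact fun y hy => (hpos y hy).ne'))
  rw [intervalIntegral.integral_eq_sub_of_hasDerivAt hderiv hint]
  simp

lemma Cfun_affine (a lam δ β : ℝ) :
    Cfun a (fun x => lam * x + δ) β
      = ∫ x in (0:ℝ)..1, (1 - x) ^ (lam * a * β + δ - 1) * exp (lam * a * β * x) := by
  unfold Cfun
  simp only [intervalIntegral.integral_of_le zero_le_one, integral_Ioc_eq_integral_Ioo]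
  refine setIntegral_congr_fun measurableSet_Ioo fun x hx => ?_
  have hx₁ : 0 < 1 - x := by linarith [hx.2]
  simp only [show ∀ y, lam * (a * β * y) + δ = lam * a * β * y + δ from fun y => by ring,
    integral_affine_div_one_sub _ _ hx.2]
  rw [rpow_sub hx₁, rpow_one, rpow_def_of_pos hx₁, div_mul_eq_mul_div, ← exp_add]
  field_simp
  ring_nf

lemma integral_rpow_mul_exp_eq_mul_integral {c : ℝ} (hc : 0 < c) (δ : ℝ) :
    ∫ s in (0:ℝ)..1, s ^ (δ / c) * exp (c * (1 - s ^ (1 / c)))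
      = c * ∫ x in (0:ℝ)..1, (1 - x) ^ (c + δ - 1) * exp (c * x) := by
  have hpos : ∀ x ∈ Ioo (min (0:ℝ) 1) (max 0 1), 0 < 1 - x := fun x hx => by
    simp only [zero_le_one, min_eq_left, max_eq_right, mem_Ioo] at hx
    linarith [hx.2]
  have hsub := intervalIntegral.integral_comp_mul_deriv_of_deriv_nonpos (a := 0) (b := 1)
    (g := fun s => s ^ (δ / c) * exp (c * (1 - s ^ (1 / c))))
    (f := fun x => (1 - x) ^ c) (f' := fun x => -(c * (1 - x) ^ (c - 1)))
    (by fun_prop (disch := positivity))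
    (fun x hx => by
      simpa using ((hasDerivAt_id' x).const_sub 1).rpow_const (p := c) (Or.inl (hpos x hx).ne'))
    (fun x hx => neg_nonpos.2 (by have := hpos x hx; positivity))
  simp only [sub_zero, one_rpow, sub_self, zero_rpow hc.ne'] at hsub
  rw [intervalIntegral.integral_symm, ← hsub, ← intervalIntegral.integral_const_mul,
    ← intervalIntegral.integral_neg]
  simp only [intervalIntegral.integral_of_le zero_le_one, integral_Ioc_eq_integral_Ioo]
  refine setIntegral_congr_fun measurableSet_Ioo fun x hx => ?_
  have hx₁ : 0 < 1 - x := by linarith [hx.2]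
  simp only [Function.comp_apply, ← rpow_mul hx₁.le, mul_div_cancel₀ _ hc.ne', rpow_one,
    sub_sub_cancel]
  rw [show c + δ - 1 = (c - 1) + δ by ring, rpow_add hx₁]
  ring

lemma mul_one_sub_exp_div_strictMonoOn {L : ℝ} (hL : L < 0) :
    StrictMonoOn (fun c => c * (1 - exp (L / c))) (Ioi 0) := by
  have slope_form : ∀ c : ℝ, 0 < c →
      c * (1 - exp (L / c)) = -L * ((exp (L / c) - exp 0) / (L / c - 0)) := by
    intro c hc
    rw [exp_zero, sub_zero]
    field_simp [hL.ne]
    ring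
  intro c₁ hc₁ c₂ hc₂ hc
  have hu : L / c₁ < L / c₂ := by
    rw [div_lt_div_iff₀ hc₁ hc₂]
    nlinarith
  have hu₂ : L / c₂ < 0 := div_neg_of_neg_of_pos hL hc₂
  simp only [slope_form c₁ hc₁, slope_form c₂ hc₂]
  exact mul_lt_mul_of_pos_left (strictConvexOn_exp.secant_strict_mono (mem_univ 0) (mem_univ _)
    (mem_univ _) (hu.trans hu₂).ne hu₂.ne hu) (neg_pos.2 hL)

lemma rpow_mul_exp_lt_of_lt {δ s c₁ c₂ : ℝ} (hδ : 0 ≤ δ) (hs : s ∈ Ioo 0 1) (hc₁ : 0 < c₁)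
    (hc : c₁ < c₂) :
    s ^ (δ / c₁) * exp (c₁ * (1 - s ^ (1 / c₁)))
      < s ^ (δ / c₂) * exp (c₂ * (1 - s ^ (1 / c₂))) := by
  have hpow : s ^ (δ / c₁) ≤ s ^ (δ / c₂) :=
    rpow_le_rpow_of_exponent_ge hs.1 hs.2.le (div_le_div_of_nonneg_left hδ hc₁ hc.le)
  have hexp : exp (c₁ * (1 - s ^ (1 / c₁))) < exp (c₂ * (1 - s ^ (1 / c₂))) := by
    simp only [rpow_def_of_pos hs.1, mul_one_div]
    exact exp_lt_exp.2
      (mul_one_sub_exp_div_strictMonoOn (log_neg hs.1 hs.2) hc₁ (hc₁.trans hc) hc)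
  exact mul_lt_mul_of_nonneg_of_pos' hpow hexp (exp_pos _).le (rpow_pos_of_pos hs.1 _)

lemma continuous_rpow_mul_exp {δ c : ℝ} (hδ : 0 ≤ δ) (hc : 0 < c) :
    Continuous fun s : ℝ => s ^ (δ / c) * exp (c * (1 - s ^ (1 / c))) := by
  have := continuous_rpow_const (q := δ / c) (by positivity)
  have := continuous_rpow_const (q := 1 / c) (by positivity)
  fun_prop

lemma integral_rpow_mul_exp_strictMonoOn {δ : ℝ} (hδ : 0 ≤ δ) :
    StrictMonoOn (fun c => ∫ s in (0:ℝ)..1, s ^ (δ / c) * exp (c * (1 - s ^ (1 / c))))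
      (Ioi 0) := by
  intro c₁ hc₁ c₂ hc₂ hc
  refine intervalIntegral.integral_lt_integral_of_continuousOn_of_le_of_exists_lt zero_lt_one
    (continuous_rpow_mul_exp hδ hc₁).continuousOn (continuous_rpow_mul_exp hδ hc₂).continuousOn
    (fun s hs => ?_) ⟨1 / 2, by norm_num, rpow_mul_exp_lt_of_lt hδ (by norm_num) hc₁ hc⟩
  rcases hs.2.eq_or_lt with rfl | hs₁
  · simp
  · exact (rpow_mul_exp_lt_of_lt hδ ⟨hs.1, hs₁⟩ hc₁ hc).le

/-- for the affine firing function `b(x) = λ x + δ` with `λ > 0`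
and `δ ≥ 0`, the map `β ↦ β C(β)` is strictly increasing on `(0, ∞)`. -/
theorem betaC_strictMonoOn_affine
    (a lam δ : ℝ) (ha : 0 < a) (hlam : 0 < lam) (hδ : 0 ≤ δ) :
    StrictMonoOn (fun β => β * Cfun a (fun x => lam * x + δ) β) (Set.Ioi 0) := by
  have hla : 0 < lam * a := mul_pos hlam ha
  have hβC : ∀ β : ℝ, 0 < β → β * Cfun a (fun x => lam * x + δ) β = (lam * a)⁻¹ *
      ∫ s in (0:ℝ)..1, s ^ (δ / (lam * a * β)) *
        exp (lam * a * β * (1 - s ^ (1 / (lam * a * β)))) := by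
    intro β hβ
    rw [Cfun_affine, integral_rpow_mul_exp_eq_mul_integral (by positivity), ← mul_assoc,
      ← mul_assoc, inv_mul_cancel₀ hla.ne', one_mul]
  intro β₁ hβ₁ β₂ hβ₂ hβ
  simp only [hβC β₁ hβ₁, hβC β₂ hβ₂]
  exact mul_lt_mul_of_pos_left (integral_rpow_mul_exp_strictMonoOn hδ (mul_pos hla hβ₁)
    (mul_pos hla hβ₂) (mul_lt_mul_of_pos_left hβ hla)) (inv_pos.2 hla)
end

section
/- Let b(x) = λx with λ > 0 and set ρ = λ·a. If ρ > 1, then there exists a unique β > 0 satisfying β·C(β) = 1; if ρ < 1, then β·C(β) > 1 for every β > 0, so no β > 0 satisfies β·C(β) = 1. -/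
open MeasureTheory Real Filter Set

/-!
For `b(x) = λx` and `c = λaβ` the inner integral is `c (-log (1 - x) - x)`, so
`C(β) = ∫₀¹ e^{cx} (1 - x)^{c-1} dx`, and the substitution `t = (1 - x)^c` turns this into
`β C(β) = J(c) / ρ` with `J(c) = ∫₀¹ exp (c (1 - t^{1/c})) dt`. The exponent lies in `[0, c]`,
so `1 ≤ J(c) ≤ e^c`; for fixed `t ∈ (0, 1)` it increases strictly with `c` towards `-log t`,
which makes `J` continuous, strictly increasing and unbounded (`J(L²) ≥ L / e`). Hence
`J(c) = ρ` has exactly one root when `ρ > 1`, while `J(c) / ρ > 1` for all `c` when `ρ < 1`.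
-/

namespace LinearFiring

noncomputable def J (c : ℝ) : ℝ := ∫ t in (0:ℝ)..1, exp (c * (1 - t ^ c⁻¹))

lemma continuous_exp_mul_one_sub_rpow_inv {c : ℝ} (hc : 0 < c) :
    Continuous fun t : ℝ => exp (c * (1 - t ^ c⁻¹)) := by
  have hrpow := continuous_rpow_const (inv_nonneg.2 hc.le)
  fun_prop

lemma one_le_J {c : ℝ} (hc : 0 < c) : 1 ≤ J c := by
  have hmono := intervalIntegral.integral_mono_on zero_le_one
    (intervalIntegrable_const (μ := volume))
    ((continuous_exp_mul_one_sub_rpow_inv hc).intervalIntegrable 0 1) fun t ht =>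
      one_le_exp (mul_nonneg hc.le (sub_nonneg.2 (rpow_le_one ht.1 ht.2 (by positivity))))
  simpa [J] using hmono

lemma J_le_exp {c : ℝ} (hc : 0 < c) : J c ≤ exp c := by
  have hmono := intervalIntegral.integral_mono_on zero_le_one
    ((continuous_exp_mul_one_sub_rpow_inv hc).intervalIntegrable 0 1)
    (intervalIntegrable_const (μ := volume))
    fun t ht => exp_le_exp.2 <| mul_le_of_le_one_right hc.le <|
      sub_le_self _ (rpow_nonneg ht.1 _)
  simpa [J] using hmono

/-- With `L = log t`, `c * (1 - t ^ c⁻¹)` is `-L` times the slope of `exp` between `L / c`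
and `0`, which increases with `c` by strict convexity of `exp`. -/
lemma strictMonoOn_mul_one_sub_rpow_inv {t : ℝ} (ht₀ : 0 < t) (ht₁ : t < 1) :
    StrictMonoOn (fun c : ℝ => c * (1 - t ^ c⁻¹)) (Ioi 0) := by
  have hL : log t < 0 := log_neg ht₀ ht₁
  have hslope : ∀ c : ℝ, 0 < c →
      c * (1 - t ^ c⁻¹) = -log t * ((exp (log t / c) - exp 0) / (log t / c - 0)) := by
    intro c hc
    have hL₀ : log t ≠ 0 := hL.ne
    rw [rpow_def_of_pos ht₀, ← div_eq_mul_inv, exp_zero, sub_zero]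
    generalize exp (log t / c) = E
    field_simp
    ring
  intro c₁ hc₁ c₂ hc₂ hlt
  dsimp only
  rw [hslope c₁ hc₁, hslope c₂ hc₂]
  refine mul_lt_mul_of_pos_left ?_ (neg_pos.2 hL)
  exact strictConvexOn_exp.secant_strict_mono (mem_univ 0) (mem_univ _) (mem_univ _)
    (div_neg_of_neg_of_pos hL hc₁).ne (div_neg_of_neg_of_pos hL hc₂).ne
    (by rw [div_lt_div_iff₀ hc₁ hc₂]; nlinarith)

lemma strictMonoOn_J : StrictMonoOn J (Ioi 0) := by
  intro c₁ hc₁ c₂ hc₂ hlt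
  have hpt : ∀ t ∈ Ioo (0:ℝ) 1, exp (c₁ * (1 - t ^ c₁⁻¹)) < exp (c₂ * (1 - t ^ c₂⁻¹)) :=
    fun t ht => exp_lt_exp.2 (strictMonoOn_mul_one_sub_rpow_inv ht.1 ht.2 hc₁ hc₂ hlt)
  refine intervalIntegral.integral_lt_integral_of_continuousOn_of_le_of_exists_lt one_pos
    (continuous_exp_mul_one_sub_rpow_inv hc₁).continuousOn
    (continuous_exp_mul_one_sub_rpow_inv hc₂).continuousOn (fun t ht => ?_)
    ⟨1 / 2, by norm_num, hpt _ (by norm_num)⟩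
  rcases ht.2.lt_or_eq with ht₁ | rfl
  · exact (hpt t ⟨ht.1, ht₁⟩).le
  · simp

lemma continuousOn_J : ContinuousOn J (Ioi 0) := by
  rw [continuousOn_iff_continuous_domRestrict]
  refine intervalIntegral.continuous_parametric_intervalIntegral_of_continuous' ?_ 0 1
  refine continuous_iff_continuousAt.2 fun p => ?_
  have : ContinuousAt (fun p : Ioi (0:ℝ) × ℝ => p.2 ^ (p.1 : ℝ)⁻¹) p :=
    ContinuousAt.rpow (by fun_prop) (by fun_prop (disch := exact p.1.2.ne'))
      (Or.inr (inv_pos.2 p.1.2))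
  exact continuous_exp.continuousAt.comp (by fun_prop)

lemma exp_neg_le_one_sub_add_sq {r : ℝ} (hr : 0 ≤ r) : exp (-r) ≤ 1 - r + r ^ 2 := by
  rw [exp_neg]
  refine inv_le_of_inv_le₀ (by nlinarith [sq_nonneg (r - 1 / 2)]) ?_
  calc (1 - r + r ^ 2)⁻¹ ≤ 1 + r := by
        rw [inv_le_iff_one_le_mul₀ (by nlinarith)]
        nlinarith [pow_nonneg hr 3]
    _ ≤ exp r := by linarith [add_one_le_exp r]

lemma neg_log_sub_sq_div_le_mul_one_sub_rpow_inv {c t : ℝ} (hc : 0 < c) (ht₀ : 0 < t)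
    (ht₁ : t ≤ 1) : -log t - log t ^ 2 / c ≤ c * (1 - t ^ c⁻¹) := by
  have hs : 0 ≤ -log t / c := div_nonneg (neg_nonneg.2 (log_nonpos ht₀.le ht₁)) hc.le
  have hrpow : t ^ c⁻¹ = exp (-(-log t / c)) := by
    rw [rpow_def_of_pos ht₀]; ring_nf
  have hbound := exp_neg_le_one_sub_add_sq hs
  rw [hrpow]
  have hexpand : c * (1 - (1 - -log t / c + (-log t / c) ^ 2)) = -log t - log t ^ 2 / c := by
    field_simp; ring
  linarith [mul_le_mul_of_nonneg_left hbound hc.le]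

lemma mul_exp_neg_one_le_J_sq {L : ℝ} (hL : 0 < L) : exp (-1) * L ≤ J (L ^ 2) := by
  set c := L ^ 2
  have hc : 0 < c := by positivity
  have hcont := continuous_exp_mul_one_sub_rpow_inv hc
  set δ := exp (-L)
  have hδ₀ : 0 < δ := exp_pos _
  have hδ₁ : δ ≤ 1 := exp_le_one_iff.2 (by linarith)
  have hpt : ∀ t ∈ Icc δ 1, exp (-1) * t⁻¹ ≤ exp (c * (1 - t ^ c⁻¹)) := by
    intro t ht
    have ht₀ : 0 < t := hδ₀.trans_le ht.1
    have hlog : -L ≤ log t := by simpa [δ] using log_le_log hδ₀ ht.1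
    have hlog' : log t ≤ 0 := log_nonpos ht₀.le ht.2
    have hsq : log t ^ 2 / c ≤ 1 := (div_le_one hc).2 (by nlinarith)
    calc exp (-1) * t⁻¹ = exp (-log t - 1) := by
          rw [sub_eq_add_neg, add_comm, exp_add, exp_neg (log t), exp_log ht₀]
      _ ≤ exp (c * (1 - t ^ c⁻¹)) := exp_le_exp.2 <| by
          linarith [neg_log_sub_sq_div_le_mul_one_sub_rpow_inv hc ht₀ ht.2]
  have hint : ∫ t in δ..1, exp (-1) * t⁻¹ = exp (-1) * L := by
    rw [intervalIntegral.integral_const_mul, integral_inv_of_pos hδ₀ one_pos, div_eq_mul_inv,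
      one_mul, log_inv, log_exp, neg_neg]
  have hinv : IntervalIntegrable (fun t : ℝ => exp (-1) * t⁻¹) volume δ 1 :=
    (intervalIntegrable_inv_iff.2 (Or.inr (by simp [uIcc_of_le hδ₁, hδ₀.not_ge]))).const_mul _
  have hlower := intervalIntegral.integral_mono_on hδ₁ hinv (hcont.intervalIntegrable δ 1) hpt
  have hhead : 0 ≤ ∫ t in (0:ℝ)..δ, exp (c * (1 - t ^ c⁻¹)) :=
    intervalIntegral.integral_nonneg hδ₀.le fun t _ => (exp_pos _).le
  rw [J, ← intervalIntegral.integral_add_adjacent_intervals (hcont.intervalIntegrable 0 δ)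
    (hcont.intervalIntegrable δ 1)]
  linarith

lemma integral_mul_div_one_sub {c x : ℝ} (hx : x < 1) :
    ∫ y in (0:ℝ)..x, c * y / (1 - y) = c * (-log (1 - x) - x) := by
  have hpos : ∀ y ∈ uIcc 0 x, 0 < 1 - y := fun y hy =>
    sub_pos.2 ((le_max_iff.1 hy.2).elim (fun h => h.trans_lt one_pos) (·.trans_lt hx))
  have hderiv : ∀ y ∈ uIcc 0 x,
      HasDerivAt (fun y => c * (-log (1 - y) - y)) (c * y / (1 - y)) y := by
    intro y hy
    refine (((((hasDerivAt_id y).const_sub 1).log (hpos y hy).ne').neg.sub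
      (hasDerivAt_id y)).const_mul c).congr_deriv ?_
    rw [id]
    field_simp [(hpos y hy).ne']
    ring
  rw [intervalIntegral.integral_eq_sub_of_hasDerivAt hderiv]
  · simp
  · exact (ContinuousOn.div (by fun_prop) (by fun_prop) fun y hy =>
      (hpos y hy).ne').intervalIntegrable

lemma Cfun_linear_eq (a lam β : ℝ) :
    Cfun a (fun x => lam * x) β
      = ∫ x in (0:ℝ)..1, exp (lam * a * β * x) * (1 - x) ^ (lam * a * β - 1) := by
  refine intervalIntegral.integral_congr_ae ?_
  filter_upwards [Measure.ae_ne volume 1] with x hx1 hx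
  rw [uIoc_of_le zero_le_one] at hx
  have h1x : 0 < 1 - x := sub_pos.2 (hx.2.lt_of_ne hx1)
  have hinner : ∫ y in (0:ℝ)..x, lam * (a * β * y) / (1 - y)
      = lam * a * β * (-log (1 - x) - x) := by
    simp_rw [← mul_assoc]
    exact integral_mul_div_one_sub (hx.2.lt_of_ne hx1)
  rw [hinner, rpow_sub h1x, rpow_one, rpow_def_of_pos h1x,
    show -(lam * a * β * (-log (1 - x) - x)) = lam * a * β * x + log (1 - x) * (lam * a * β) by
      ring, exp_add]
  ring

lemma mul_integral_exp_mul_one_sub_rpow {c : ℝ} (hc : 0 < c) :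
    c * ∫ x in (0:ℝ)..1, exp (c * x) * (1 - x) ^ (c - 1) = J c := by
  have hsubst := intervalIntegral.integral_comp_mul_deriv_of_deriv_nonpos (a := 0) (b := 1)
    (f := fun x => (1 - x) ^ c) (f' := fun x => -(c * (1 - x) ^ (c - 1)))
    (g := fun t => exp (c * (1 - t ^ c⁻¹)))
    ((continuous_rpow_const hc.le).comp (continuous_const.sub continuous_id)).continuousOn
    (fun x hx => by
      simp only [zero_le_one, min_eq_left, max_eq_right] at hx
      simpa using ((hasDerivAt_id x).const_sub 1).rpow_const (p := c)
        (Or.inl (sub_pos.2 hx.2).ne'))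
    (fun x hx => by
      simp only [zero_le_one, min_eq_left, max_eq_right] at hx
      exact neg_nonpos.2 (mul_nonneg hc.le (rpow_nonneg (sub_pos.2 hx.2).le _)))
  simp only [sub_zero, one_rpow, sub_self, zero_rpow hc.ne'] at hsubst
  rw [intervalIntegral.integral_symm 0 1] at hsubst
  rw [J, ← neg_eq_iff_eq_neg.2 hsubst, ← intervalIntegral.integral_const_mul,
    ← intervalIntegral.integral_neg]
  refine intervalIntegral.integral_congr fun x hx => ?_
  rw [uIcc_of_le zero_le_one] at hx
  simp only [Function.comp_apply]
  rw [← rpow_mul (by linarith [hx.2]), mul_inv_cancel₀ hc.ne', rpow_one, sub_sub_cancel]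
  ring

lemma mul_Cfun_linear {a lam β : ℝ} (hc : 0 < lam * a * β) :
    β * Cfun a (fun x => lam * x) β = J (lam * a * β) / (lam * a) := by
  have hρ : lam * a ≠ 0 := left_ne_zero_of_mul hc.ne'
  rw [← mul_integral_exp_mul_one_sub_rpow hc, Cfun_linear_eq, eq_div_iff hρ]
  ring

lemma existsUnique_J_eq {ρ : ℝ} (hρ : 1 < ρ) : ∃! c, 0 < c ∧ J c = ρ := by
  have hc₁ : 0 < log ρ / 2 := half_pos (log_pos hρ)
  have hJ₁ : J (log ρ / 2) ≤ ρ := by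
    refine (J_le_exp hc₁).trans ?_
    calc exp (log ρ / 2) ≤ exp (log ρ) := exp_le_exp.2 (by linarith)
      _ = ρ := exp_log (by linarith)
  have hc₂ : 0 < (exp 1 * ρ) ^ 2 := by positivity
  have hJ₂ : ρ ≤ J ((exp 1 * ρ) ^ 2) := by
    have := mul_exp_neg_one_le_J_sq (L := exp 1 * ρ) (by positivity)
    rwa [← mul_assoc, ← exp_add, neg_add_cancel, exp_zero, one_mul] at this
  obtain ⟨c, hc, hJc⟩ := isPreconnected_Ioi.intermediate_value hc₁ hc₂ continuousOn_J ⟨hJ₁, hJ₂⟩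
  exact ⟨c, ⟨hc, hJc⟩, fun c' hc' => strictMonoOn_J.injOn hc'.1 hc (hc'.2.trans hJc.symm)⟩

end LinearFiring

/-- for the linear firing function `b(x) = λ x` with `λ > 0` and
`ρ = λ a`: if `ρ > 1` there is a unique `β > 0` with `β C(β) = 1`; if `ρ < 1`
then `β C(β) > 1` for every `β > 0`, so no solution exists. -/
theorem fixed_point_linear
    (a lam : ℝ) (ha : 0 < a) (hlam : 0 < lam) :
    (1 < lam * a → ∃! β : ℝ, 0 < β ∧ β * Cfun a (fun x => lam * x) β = 1) ∧
    (lam * a < 1 → ∀ β : ℝ, 0 < β → 1 < β * Cfun a (fun x => lam * x) β) := by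
  have hρ : 0 < lam * a := mul_pos hlam ha
  refine ⟨fun hρ₁ => ?_, fun hρ₁ β hβ => ?_⟩
  · obtain ⟨c, ⟨hc, hJc⟩, huniq⟩ := LinearFiring.existsUnique_J_eq hρ₁
    have hcβ : lam * a * (c / (lam * a)) = c := mul_div_cancel₀ c hρ.ne'
    refine ⟨c / (lam * a), ⟨div_pos hc hρ, ?_⟩, fun β ⟨hβ, hβC⟩ => ?_⟩
    · rw [LinearFiring.mul_Cfun_linear (by rwa [hcβ]), hcβ, hJc, div_self hρ.ne']
    · rw [LinearFiring.mul_Cfun_linear (mul_pos hρ hβ), div_eq_one_iff_eq hρ.ne'] at hβC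
      rw [← huniq _ ⟨mul_pos hρ hβ, hβC⟩, mul_div_cancel_left₀ β hρ.ne']
  · rw [LinearFiring.mul_Cfun_linear (mul_pos hρ hβ), one_lt_div hρ]
    exact hρ₁.trans_le (LinearFiring.one_le_J (mul_pos hρ hβ))
end

section
/- Let b(x) = λx^α + γ with λ > 0, 0 < α < 1 and γ ≥ 0. Then the map β ↦ β·C(β) is strictly increasing on (0, ∞). -/
open MeasureTheory Real Filter Set

/-!
Substituting `u = F x` with `F x = ∫₀ˣ t^α / (1 - t) dt` turns `C(β)` into the Laplace transform
`L(c) = ∫₀^∞ e^(-c u) ψ(u) du` at `c = λ (aβ)^α`, where `ψ(u) = (1 - x)^γ / x^α` for `x = F⁻¹ u`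
is positive and decreasing. For such `ψ`, `c L(c) = ∫₀^∞ e^(-w) ψ(w / c) dw` is nondecreasing
in `c`, so `β C(β) = (λ a^α)⁻¹ β^(1-α) · c L(c)` is a strictly increasing positive factor times
a positive nondecreasing one. Finiteness of `L` comes from `F x ≥ -log (1 - x) - x`, which
bounds the integrand of `C` by `e^c (1 - x)^(c - 1)`.
-/

namespace SublinearFiring

noncomputable def laplace (Ψ : ℝ → ℝ) (c : ℝ) : ℝ := ∫ u in Ioi 0, exp (-(c * u)) * Ψ u

section Laplace

variable {Ψ : ℝ → ℝ}

lemma mul_laplace_eq {c : ℝ} (hc : 0 < c) :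
    c * laplace Ψ c = ∫ w in Ioi 0, exp (-w) * Ψ (w / c) := by
  have h := integral_comp_mul_left_Ioi (fun w => exp (-w) * Ψ (w / c)) 0 hc
  simp only [mul_zero, smul_eq_mul, mul_div_cancel_left₀ _ hc.ne'] at h
  rw [laplace, h, mul_inv_cancel_left₀ hc.ne']

lemma integrableOn_exp_neg_mul_comp_div {c : ℝ} (hc : 0 < c)
    (hΨ : IntegrableOn (fun u => exp (-(c * u)) * Ψ u) (Ioi 0)) :
    IntegrableOn (fun w => exp (-w) * Ψ (w / c)) (Ioi 0) := by
  rw [← mul_zero c, ← integrableOn_Ioi_comp_mul_left_iff _ 0 hc]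
  simpa only [mul_div_cancel_left₀ _ hc.ne'] using hΨ

lemma laplace_pos (hpos : ∀ u > 0, 0 < Ψ u) {c : ℝ}
    (hint : IntegrableOn (fun u => exp (-(c * u)) * Ψ u) (Ioi 0)) : 0 < laplace Ψ c := by
  have hf : ∀ u ∈ Ioi (0:ℝ), 0 < exp (-(c * u)) * Ψ u := fun u hu =>
    mul_pos (exp_pos _) (hpos u hu)
  rw [laplace, setIntegral_pos_iff_support_of_nonneg_ae
    (ae_restrict_of_forall_mem measurableSet_Ioi fun u hu => (hf u hu).le) hint,
    inter_eq_right.mpr fun u hu => Function.mem_support.mpr (hf u hu).ne', Real.volume_Ioi]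
  exact ENNReal.zero_lt_top

lemma monotoneOn_mul_laplace (hanti : AntitoneOn Ψ (Ioi 0))
    (hint : ∀ c > 0, IntegrableOn (fun u => exp (-(c * u)) * Ψ u) (Ioi 0)) :
    MonotoneOn (fun c => c * laplace Ψ c) (Ioi 0) := by
  intro c (hc : 0 < c) c' (hc' : 0 < c') hle
  simp only [mul_laplace_eq hc, mul_laplace_eq hc']
  refine setIntegral_mono_on (integrableOn_exp_neg_mul_comp_div hc (hint c hc))
    (integrableOn_exp_neg_mul_comp_div hc' (hint c' hc')) measurableSet_Ioi fun w hw => ?_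
  have hw : 0 < w := hw
  exact mul_le_mul_of_nonneg_left (hanti (div_pos hw hc') (div_pos hw hc)
    (div_le_div_of_nonneg_left hw.le hc hle)) (exp_pos _).le

theorem strictMonoOn_mul_laplace_mul_rpow {α k : ℝ} (hα0 : 0 ≤ α) (hα1 : α < 1) (hk : 0 < k)
    (hpos : ∀ u > 0, 0 < Ψ u) (hanti : AntitoneOn Ψ (Ioi 0))
    (hint : ∀ c > 0, IntegrableOn (fun u => exp (-(c * u)) * Ψ u) (Ioi 0)) :
    StrictMonoOn (fun β => β * laplace Ψ (k * β ^ α)) (Ioi 0) := by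
  set M := fun c => c * laplace Ψ c
  have hrepr : ∀ β > 0, β * laplace Ψ (k * β ^ α) = k⁻¹ * β ^ (1 - α) * M (k * β ^ α) := by
    intro β hβ
    simp only [M, rpow_sub hβ, rpow_one]
    field_simp
  intro β (hβ : 0 < β) β' (hβ' : 0 < β') hlt
  have hc : 0 < k * β ^ α := by positivity
  have hc' : 0 < k * β' ^ α := by positivity
  have hM : 0 < M (k * β ^ α) := mul_pos hc (laplace_pos hpos (hint _ hc))
  have hMle : M (k * β ^ α) ≤ M (k * β' ^ α) :=
    monotoneOn_mul_laplace hanti hint hc hc' (by gcongr)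
  simp only [hrepr β hβ, hrepr β' hβ']
  calc k⁻¹ * β ^ (1 - α) * M (k * β ^ α) < k⁻¹ * β' ^ (1 - α) * M (k * β ^ α) := by
        gcongr
    _ ≤ k⁻¹ * β' ^ (1 - α) * M (k * β' ^ α) := by
        have hβ'pow : 0 < β' ^ (1 - α) := by positivity
        gcongr

end Laplace

noncomputable def hazard (α x : ℝ) : ℝ := ∫ t in (0:ℝ)..x, t ^ α / (1 - t)

section Hazard

variable {α : ℝ}

lemma uIcc_subset_Iio_one {u v : ℝ} (hu : u < 1) (hv : v < 1) : uIcc u v ⊆ Iio 1 :=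
  fun _ ht => ht.2.trans_lt (max_lt hu hv)

lemma continuousOn_inv_one_sub : ContinuousOn (fun t : ℝ => (1 - t)⁻¹) (Iio 1) :=
  (continuousOn_const.sub continuousOn_id).inv₀ fun _ ht => sub_ne_zero.mpr (ne_of_gt ht)

lemma continuousOn_rpow_div_one_sub (hα : 0 ≤ α) :
    ContinuousOn (fun t : ℝ => t ^ α / (1 - t)) (Iio 1) :=
  ((continuous_rpow_const hα).continuousOn).div (continuousOn_const.sub continuousOn_id)
    fun _ ht => sub_ne_zero.mpr (ne_of_gt ht)

lemma integral_inv_one_sub {x : ℝ} (hx : x < 1) :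
    ∫ t in (0:ℝ)..x, (1 - t)⁻¹ = -log (1 - x) := by
  rw [intervalIntegral.integral_comp_sub_left (fun t => t⁻¹) 1, sub_zero,
    integral_inv_of_pos (by linarith) one_pos]
  simp [log_inv]

lemma hasDerivAt_hazard (hα : 0 ≤ α) {x : ℝ} (hx : x < 1) :
    HasDerivAt (hazard α) (x ^ α / (1 - x)) x :=
  intervalIntegral.integral_hasDerivAt_right
    ((continuousOn_rpow_div_one_sub hα).mono (uIcc_subset_Iio_one one_pos hx)).intervalIntegrable
    ((continuousOn_rpow_div_one_sub hα).stronglyMeasurableAtFilter isOpen_Iio x hx)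
    ((continuousOn_rpow_div_one_sub hα).continuousAt (isOpen_Iio.mem_nhds hx))

lemma continuousOn_hazard (hα : 0 ≤ α) : ContinuousOn (hazard α) (Iio 1) := fun _ hx =>
  (hasDerivAt_hazard hα hx).continuousAt.continuousWithinAt

lemma hazard_zero : hazard α 0 = 0 := intervalIntegral.integral_same

lemma strictMonoOn_hazard (hα : 0 ≤ α) : StrictMonoOn (hazard α) (Ico 0 1) := by
  refine strictMonoOn_of_deriv_pos (convex_Ico 0 1)
    ((continuousOn_hazard hα).mono fun _ hx => hx.2) fun x hx => ?_
  rw [interior_Ico] at hx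
  rw [(hasDerivAt_hazard hα hx.2).deriv]
  exact div_pos (rpow_pos_of_pos hx.1 α) (sub_pos.mpr hx.2)

lemma hazard_pos (hα : 0 ≤ α) {x : ℝ} (hx : x ∈ Ioo 0 1) : 0 < hazard α x := by
  simpa [hazard_zero] using
    strictMonoOn_hazard hα (left_mem_Ico.mpr one_pos) (Ioo_subset_Ico_self hx) hx.1

/-- Since `t ≤ t ^ α` on `[0, 1]`, `hazard α` dominates `hazard 1`. -/
lemma neg_log_one_sub_sub_le_hazard (hα : 0 ≤ α) (hα1 : α ≤ 1) {x : ℝ} (hx0 : 0 ≤ x)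
    (hx1 : x < 1) :
    -log (1 - x) - x ≤ hazard α x := by
  have hsub : uIcc 0 x ⊆ Iio 1 := uIcc_subset_Iio_one one_pos hx1
  have hint : IntervalIntegrable (fun t : ℝ => (1 - t)⁻¹) volume 0 x :=
    (continuousOn_inv_one_sub.mono hsub).intervalIntegrable
  calc -log (1 - x) - x = ∫ t in (0:ℝ)..x, ((1 - t)⁻¹ - 1) := by
        rw [intervalIntegral.integral_sub hint intervalIntegrable_const, integral_inv_one_sub hx1]
        simp
    _ ≤ hazard α x := by
        refine intervalIntegral.integral_mono_on hx0 (hint.sub intervalIntegrable_const)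
          ((continuousOn_rpow_div_one_sub hα).mono hsub).intervalIntegrable fun t ht => ?_
        have h1t : 0 < 1 - t := by linarith [ht.2]
        calc (1 - t)⁻¹ - 1 = t / (1 - t) := by field_simp; ring
          _ ≤ t ^ α / (1 - t) := by
            gcongr
            exact self_le_rpow_of_le_one ht.1 (by linarith) hα1

lemma hazard_image_Ioo (hα : 0 ≤ α) (hα1 : α ≤ 1) : hazard α '' Ioo 0 1 = Ioi 0 := by
  refine (image_subset_iff.mpr fun x hx => hazard_pos hα hx).antisymm fun u (hu : 0 < u) => ?_
  set x₁ := 1 - exp (-(u + 2))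
  have hx₁ : x₁ ∈ Ioo 0 1 := ⟨by simp [x₁]; linarith, by simp [x₁, exp_pos]⟩
  have hu₁ : u < hazard α x₁ := by
    have := neg_log_one_sub_sub_le_hazard hα hα1 hx₁.1.le hx₁.2
    simp only [x₁, sub_sub_cancel, log_exp] at this
    linarith [hx₁.2]
  obtain ⟨x, hx, rfl⟩ := intermediate_value_Ioo hx₁.1.le
    ((continuousOn_hazard hα).mono fun _ ht => ht.2.trans_lt hx₁.2)
    (by rw [hazard_zero]; exact ⟨hu, hu₁⟩)
  exact ⟨x, ⟨hx.1, hx.2.trans hx₁.2⟩, rfl⟩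

noncomputable def hazardInv (α : ℝ) : ℝ → ℝ := Function.invFunOn (hazard α) (Ioo 0 1)

lemma hazard_hazardInv (hα : 0 ≤ α) (hα1 : α ≤ 1) {u : ℝ} (hu : 0 < u) :
    hazard α (hazardInv α u) = u :=
  Function.invFunOn_eq (show u ∈ hazard α '' Ioo 0 1 by rwa [hazard_image_Ioo hα hα1])

lemma hazardInv_mem (hα : 0 ≤ α) (hα1 : α ≤ 1) {u : ℝ} (hu : 0 < u) :
    hazardInv α u ∈ Ioo 0 1 :=
  Function.invFunOn_mem (show u ∈ hazard α '' Ioo 0 1 by rwa [hazard_image_Ioo hα hα1])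

lemma hazardInv_hazard (hα : 0 ≤ α) {x : ℝ} (hx : x ∈ Ioo 0 1) :
    hazardInv α (hazard α x) = x :=
  ((strictMonoOn_hazard hα).mono Ioo_subset_Ico_self).injOn.leftInvOn_invFunOn hx

lemma monotoneOn_hazardInv (hα : 0 ≤ α) (hα1 : α ≤ 1) : MonotoneOn (hazardInv α) (Ioi 0) := by
  intro u (hu : 0 < u) v (hv : 0 < v) huv
  have h := (strictMonoOn_hazard hα).le_iff_le (Ioo_subset_Ico_self (hazardInv_mem hα hα1 hu))
    (Ioo_subset_Ico_self (hazardInv_mem hα hα1 hv))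
  rw [hazard_hazardInv hα hα1 hu, hazard_hazardInv hα hα1 hv] at h
  exact h.mp huv

noncomputable def psi (α γ u : ℝ) : ℝ := (1 - hazardInv α u) ^ γ / hazardInv α u ^ α

variable {γ : ℝ}

lemma psi_hazard (hα : 0 ≤ α) {x : ℝ} (hx : x ∈ Ioo 0 1) :
    psi α γ (hazard α x) = (1 - x) ^ γ / x ^ α := by
  rw [psi, hazardInv_hazard hα hx]

lemma psi_pos (hα : 0 ≤ α) (hα1 : α ≤ 1) {u : ℝ} (hu : 0 < u) : 0 < psi α γ u := by
  obtain ⟨h0, h1⟩ := hazardInv_mem hα hα1 hu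
  exact div_pos (rpow_pos_of_pos (sub_pos.mpr h1) γ) (rpow_pos_of_pos h0 α)

lemma psi_antitoneOn (hα : 0 ≤ α) (hα1 : α ≤ 1) (hγ : 0 ≤ γ) :
    AntitoneOn (psi α γ) (Ioi 0) := by
  intro u hu v hv huv
  obtain ⟨hXu0, hXu1⟩ := hazardInv_mem hα hα1 hu
  obtain ⟨-, hXv1⟩ := hazardInv_mem hα hα1 hv
  have hX := monotoneOn_hazardInv hα hα1 hu hv huv
  unfold psi
  gcongr

lemma rpow_div_one_sub_mul_exp_mul_psi_hazard (hα : 0 ≤ α) {c x : ℝ} (hx : x ∈ Ioo 0 1) :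
    x ^ α / (1 - x) * (exp (-(c * hazard α x)) * psi α γ (hazard α x))
      = (1 - x)⁻¹ * exp (-(c * hazard α x - γ * log (1 - x))) := by
  have h1x : 0 < 1 - x := sub_pos.mpr hx.2
  have hxα : 0 < x ^ α := rpow_pos_of_pos hx.1 α
  rw [psi_hazard hα hx, neg_sub, exp_sub, exp_neg, mul_comm γ, ← rpow_def_of_pos h1x]
  field_simp

lemma laplace_psi_eq (hα : 0 ≤ α) (hα1 : α ≤ 1) (c : ℝ) :
    laplace (psi α γ) c
      = ∫ x in Ioo 0 1, (1 - x)⁻¹ * exp (-(c * hazard α x - γ * log (1 - x))) := by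
  rw [laplace, ← hazard_image_Ioo hα hα1, integral_image_eq_integral_deriv_smul_of_monotoneOn
    measurableSet_Ioo (fun x hx => (hasDerivAt_hazard hα hx.2).hasDerivWithinAt)
    ((strictMonoOn_hazard hα).monotoneOn.mono Ioo_subset_Ico_self)]
  exact setIntegral_congr_fun measurableSet_Ioo fun x hx =>
    rpow_div_one_sub_mul_exp_mul_psi_hazard hα hx

lemma integrableOn_inv_one_sub_mul_exp_hazard (hα : 0 ≤ α) (hα1 : α ≤ 1) (hγ : 0 ≤ γ)
    {c : ℝ} (hc : 0 < c) :
    IntegrableOn (fun x => (1 - x)⁻¹ * exp (-(c * hazard α x - γ * log (1 - x)))) (Ioo 0 1) := by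
  have hdom : IntegrableOn (fun x : ℝ => exp c * (1 - x) ^ (c - 1)) (Ioo 0 1) := by
    have := (intervalIntegral.intervalIntegrable_rpow' (a := 1) (b := 0)
      (by linarith : (-1:ℝ) < c - 1)).comp_sub_left 1
    rw [sub_self, sub_zero] at this
    exact (intervalIntegrable_iff_integrableOn_Ioo_of_le zero_le_one).mp (this.const_mul _)
  have hsub : Ioo (0:ℝ) 1 ⊆ Iio 1 := fun _ hx => hx.2
  have hcont : ContinuousOn (fun x => (1 - x)⁻¹ * exp (-(c * hazard α x - γ * log (1 - x))))
      (Ioo 0 1) :=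
    (continuousOn_inv_one_sub.mono hsub).mul (((continuousOn_const.mul
      ((continuousOn_hazard hα).mono hsub)).sub (continuousOn_const.mul
      ((continuousOn_const.sub continuousOn_id).log fun x hx => (sub_pos.mpr hx.2).ne'))).neg.rexp)
  refine hdom.mono' (hcont.aestronglyMeasurable measurableSet_Ioo)
    (ae_restrict_of_forall_mem measurableSet_Ioo fun x hx => ?_)
  have h1x : 0 < 1 - x := sub_pos.mpr hx.2
  have hlog : log (1 - x) ≤ 0 := log_nonpos h1x.le (by linarith [hx.1])
  have hF := neg_log_one_sub_sub_le_hazard hα hα1 hx.1.le hx.2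
  rw [norm_of_nonneg (by positivity)]
  calc (1 - x)⁻¹ * exp (-(c * hazard α x - γ * log (1 - x)))
      ≤ (1 - x)⁻¹ * exp (c + c * log (1 - x)) := by
        gcongr
        nlinarith [hx.2, mul_nonpos_of_nonneg_of_nonpos hγ hlog]
    _ = exp c * (1 - x) ^ (c - 1) := by
        rw [exp_add, rpow_sub_one h1x.ne', rpow_def_of_pos h1x, mul_comm (log _)]
        field_simp

lemma integrableOn_exp_mul_psi (hα : 0 ≤ α) (hα1 : α ≤ 1) (hγ : 0 ≤ γ) {c : ℝ}
    (hc : 0 < c) :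
    IntegrableOn (fun u => exp (-(c * u)) * psi α γ u) (Ioi 0) := by
  rw [← hazard_image_Ioo hα hα1, integrableOn_image_iff_integrableOn_deriv_smul_of_monotoneOn
    measurableSet_Ioo (fun x hx => (hasDerivAt_hazard hα hx.2).hasDerivWithinAt)
    ((strictMonoOn_hazard hα).monotoneOn.mono Ioo_subset_Ico_self)]
  exact (integrableOn_inv_one_sub_mul_exp_hazard hα hα1 hγ hc).congr_fun
    (fun x hx => (rpow_div_one_sub_mul_exp_mul_psi_hazard hα hx).symm) measurableSet_Ioo

lemma integral_sublinear_div_one_sub (hα : 0 ≤ α) {lam s x : ℝ} (hs : 0 ≤ s) (hx0 : 0 ≤ x)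
    (hx1 : x < 1) :
    ∫ y in (0:ℝ)..x, (lam * (s * y) ^ α + γ) / (1 - y)
      = lam * s ^ α * hazard α x - γ * log (1 - x) := by
  have hsub := uIcc_subset_Iio_one one_pos hx1
  have hcongr : EqOn (fun y => (lam * (s * y) ^ α + γ) / (1 - y))
      (fun y => lam * s ^ α * (y ^ α / (1 - y)) + γ * (1 - y)⁻¹) (uIcc 0 x) := by
    intro y hy
    rw [uIcc_of_le hx0] at hy
    have h1y : 1 - y ≠ 0 := (sub_pos.mpr (hy.2.trans_lt hx1)).ne'
    simp only [mul_rpow hs hy.1]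
    field_simp
  rw [intervalIntegral.integral_congr hcongr, intervalIntegral.integral_add
    (((continuousOn_rpow_div_one_sub hα).mono hsub).intervalIntegrable.const_mul _)
    ((continuousOn_inv_one_sub.mono hsub).intervalIntegrable.const_mul _),
    intervalIntegral.integral_const_mul, intervalIntegral.integral_const_mul,
    integral_inv_one_sub hx1, hazard]
  ring

lemma Cfun_sublinear_eq_laplace_psi (hα : 0 ≤ α) (hα1 : α ≤ 1) {a lam β : ℝ}
    (hab : 0 ≤ a * β) :
    Cfun a (fun x => lam * x ^ α + γ) β = laplace (psi α γ) (lam * (a * β) ^ α) := by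
  rw [laplace_psi_eq hα hα1, Cfun, intervalIntegral.integral_of_le zero_le_one,
    integral_Ioc_eq_integral_Ioo]
  refine setIntegral_congr_fun measurableSet_Ioo fun x hx => ?_
  simp only [integral_sublinear_div_one_sub hα hab hx.1.le hx.2]

end Hazard

end SublinearFiring

open SublinearFiring

/-- for the sub-linear power firing function `b(x) = λ x^α + γ`
with `λ > 0`, `0 < α < 1` and `γ ≥ 0`, the map `β ↦ β C(β)` is strictly
increasing on `(0, ∞)`. -/
theorem betaC_strictMonoOn_sublinear
    (a lam α γ : ℝ) (ha : 0 < a) (hlam : 0 < lam)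
    (hα : 0 < α) (hα1 : α < 1) (hγ : 0 ≤ γ) :
    StrictMonoOn
      (fun β => β * Cfun a (fun x => lam * x ^ α + γ) β) (Set.Ioi 0) := by
  have hk : 0 < lam * a ^ α := by positivity
  refine (strictMonoOn_mul_laplace_mul_rpow hα.le hα1 hk (fun u hu => psi_pos hα.le hα1.le hu)
    (psi_antitoneOn hα.le hα1.le hγ) fun c hc => integrableOn_exp_mul_psi hα.le hα1.le hγ hc).congr
    fun β (hβ : 0 < β) => ?_
  dsimp only
  rw [Cfun_sublinear_eq_laplace_psi hα.le hα1.le (by positivity), mul_rpow ha.le hβ.le, mul_assoc]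
end

section
/- Let b(x) = λx^α + γ with λ > 0, 0 < α < 1 and γ ≥ 0. Then there exists a unique β > 0 satisfying the fixed point equation β·C(β) = 1 (i.e. the mean-field equations admit a unique non-trivial invariant distribution). -/
/-!
Substituting `x = 1 - e^{-u}` turns `C(β)` into `∫₀^∞ exp (-(κ M(u) + γ) u) du` with
`κ = λ (aβ)^α`, where `M(u) = ∫₀¹ (1 - e^{-ur})^α dr` is the mean of `(1 - e^{-v})^α` over
`[0, u]`. Rescaling `u = w / β`, the exponent of `β C(β)` becomes
`(c β^(α-1) M(w/β) + γ/β) w` with `c = λ a^α`, which is strictly decreasing in `β` since `α < 1`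
and `M` is nondecreasing; so `β ↦ β C(β)` is strictly increasing. It is continuous by dominated
convergence, tends to `0` as `β → 0` because `u M(u) ≥ M(1) (u - 1)` gives
`β C(β) ≤ β^(1-α) e^{c M(1) β^α} / (c M(1))`, and exceeds `1` for large `β` because `M ≤ 1`
gives `β C(β) ≥ β / (c β^α + γ)`. The intermediate value theorem gives the unique root.
-/

open MeasureTheory Real Filter Set

open scoped Topology

lemma setIntegral_lt_setIntegral {X : Type*} [MeasurableSpace X] {μ : Measure X} {s : Set X}
    {f g : X → ℝ} (hs : MeasurableSet s) (hμs : μ s ≠ 0) (hf : IntegrableOn f s μ)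
    (hg : IntegrableOn g s μ) (hfg : ∀ x ∈ s, f x < g x) :
    ∫ x in s, f x ∂μ < ∫ x in s, g x ∂μ := by
  rw [← sub_pos, ← integral_sub hg hf, setIntegral_pos_iff_support_of_nonneg_ae
    ((ae_restrict_iff' hs).2 (Eventually.of_forall fun x hx => (sub_pos.2 (hfg x hx)).le))
    (hg.sub hf), (inter_eq_right.2 fun x hx => (sub_pos.2 (hfg x hx)).ne' :
      (Function.support fun x => g x - f x) ∩ s = s)]
  exact pos_iff_ne_zero.2 hμs

lemma integral_exp_neg_mul_Ioi_zero {k : ℝ} (hk : 0 < k) : ∫ u in Ioi 0, exp (-k * u) = k⁻¹ := by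
  simpa using integral_exp_mul_Ioi (neg_lt_zero.2 hk) 0

lemma one_sub_exp_neg_nonneg {x : ℝ} (hx : 0 ≤ x) : 0 ≤ 1 - exp (-x) := by
  simpa using exp_le_one_iff.2 (neg_nonpos.2 hx)

lemma hasDerivAt_one_sub_exp_neg (u : ℝ) :
    HasDerivAt (fun v => 1 - exp (-v)) (exp (-u)) u := by
  simpa using ((hasDerivAt_neg u).exp).const_sub 1

lemma image_one_sub_exp_neg_Ioi : (fun u => 1 - exp (-u)) '' Ioi 0 = Ioo 0 1 := by
  rw [show (fun u => 1 - exp (-u)) = (fun y => 1 - y) ∘ exp ∘ Neg.neg from rfl, image_comp,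
    image_comp, image_neg_Ioi, neg_zero, image_exp_Iio, exp_zero, image_const_sub_Ioo]
  norm_num

lemma integral_Ioo_zero_one_eq_integral_Ioi (g : ℝ → ℝ) :
    ∫ x in Ioo 0 1, g x = ∫ u in Ioi 0, exp (-u) * g (1 - exp (-u)) := by
  have hinj : Function.Injective fun u : ℝ => 1 - exp (-u) := fun u v h => by simpa using h
  rw [← image_one_sub_exp_neg_Ioi, integral_image_eq_integral_abs_deriv_smul measurableSet_Ioi
    (fun u _ => (hasDerivAt_one_sub_exp_neg u).hasDerivWithinAt) hinj.injOn]
  simp only [abs_of_pos (exp_pos _), smul_eq_mul]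

lemma integral_div_one_sub_eq_integral_comp {f : ℝ → ℝ} (hf : Continuous f) (u : ℝ) :
    ∫ y in 0..1 - exp (-u), f y / (1 - y) = ∫ v in 0..u, f (1 - exp (-v)) := by
  have hg : ContinuousOn (fun y => f y / (1 - y)) ((fun v => 1 - exp (-v)) '' uIcc 0 u) :=
    hf.continuousOn.div (by fun_prop) (by rintro _ ⟨v, -, rfl⟩; simp [exp_ne_zero])
  have h := intervalIntegral.integral_comp_mul_deriv' (fun v _ => hasDerivAt_one_sub_exp_neg v)
    (by fun_prop) hg
  rw [neg_zero, exp_zero, sub_self] at h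
  rw [← h]
  refine intervalIntegral.integral_congr fun v _ => ?_
  simp [sub_sub_cancel, exp_ne_zero]

theorem Cfun_eq_integral_Ioi (a β : ℝ) {b : ℝ → ℝ} (hb : Continuous b) :
    Cfun a b β = ∫ u in Ioi 0, exp (-∫ v in 0..u, b (a * β * (1 - exp (-v)))) := by
  rw [Cfun, intervalIntegral.integral_of_le zero_le_one, integral_Ioc_eq_integral_Ioo,
    integral_Ioo_zero_one_eq_integral_Ioi]
  refine setIntegral_congr_fun measurableSet_Ioi fun u _ => ?_
  rw [integral_div_one_sub_eq_integral_comp (f := fun y => b (a * β * y)) (by fun_prop), sub_sub_cancel,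
    ← mul_assoc, mul_inv_cancel₀ (exp_pos _).ne', one_mul]

section rateMean

variable {α u : ℝ}

noncomputable def rateMean (α u : ℝ) : ℝ := ∫ r in (0:ℝ)..1, (1 - exp (-(u * r))) ^ α

lemma integral_one_sub_exp_neg_rpow (α u : ℝ) :
    ∫ v in 0..u, (1 - exp (-v)) ^ α = u * rateMean α u := by
  simpa [rateMean] using (intervalIntegral.smul_integral_comp_mul_left
    (fun v => (1 - exp (-v)) ^ α) u (a := 0) (b := 1)).symm

lemma continuous_one_sub_exp_neg_rpow (hα : 0 ≤ α) : Continuous fun v => (1 - exp (-v)) ^ α :=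
  (continuous_rpow_const hα).comp (by fun_prop)

lemma continuous_rateMean (hα : 0 ≤ α) : Continuous (rateMean α) :=
  intervalIntegral.continuous_parametric_intervalIntegral_of_continuous'
    (f := fun u r => (1 - exp (-(u * r))) ^ α)
    ((continuous_one_sub_exp_neg_rpow hα).comp (continuous_fst.mul continuous_snd)) 0 1

lemma intervalIntegrable_rateMean_integrand (hα : 0 ≤ α) (u : ℝ) :
    IntervalIntegrable (fun r => (1 - exp (-(u * r))) ^ α) volume 0 1 :=
  ((continuous_one_sub_exp_neg_rpow hα).comp (continuous_const_mul u)).intervalIntegrable 0 1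

lemma rateMean_nonneg (hu : 0 ≤ u) : 0 ≤ rateMean α u :=
  intervalIntegral.integral_nonneg zero_le_one fun _ hr =>
    rpow_nonneg (one_sub_exp_neg_nonneg (mul_nonneg hu hr.1)) α

lemma rateMean_pos (hα : 0 ≤ α) (hu : 0 < u) : 0 < rateMean α u :=
  intervalIntegral.intervalIntegral_pos_of_pos_on
    (intervalIntegrable_rateMean_integrand hα u)
    (fun _ hr => rpow_pos_of_pos (by simpa using mul_pos hu hr.1) α) zero_lt_one

lemma rateMean_le_one (hα : 0 ≤ α) (hu : 0 ≤ u) : rateMean α u ≤ 1 := by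
  simpa [rateMean] using intervalIntegral.integral_mono_on zero_le_one
    (intervalIntegrable_rateMean_integrand hα u)
    (intervalIntegrable_const (μ := volume)) fun r hr =>
      rpow_le_one (one_sub_exp_neg_nonneg (mul_nonneg hu hr.1))
        (sub_le_self _ (exp_pos _).le) hα

lemma monotoneOn_rateMean (hα : 0 ≤ α) : MonotoneOn (rateMean α) (Ici 0) := by
  intro u hu v hv huv
  refine intervalIntegral.integral_mono_on zero_le_one
    (intervalIntegrable_rateMean_integrand hα u)
    (intervalIntegrable_rateMean_integrand hα v)
    fun r hr => rpow_le_rpow (one_sub_exp_neg_nonneg (mul_nonneg hu hr.1)) ?_ hα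
  gcongr
  exact hr.1

lemma mul_sub_one_le_mul_rateMean (hα : 0 ≤ α) (hu : 0 ≤ u) :
    rateMean α 1 * (u - 1) ≤ u * rateMean α u := by
  have hm := rateMean_nonneg (α := α) zero_le_one
  rcases le_total u 1 with hu1 | hu1
  · nlinarith [rateMean_nonneg (α := α) hu]
  · nlinarith [monotoneOn_rateMean hα (mem_Ici.2 zero_le_one) (mem_Ici.2 hu) hu1]

end rateMean

section powerCfun

variable {α γ κ : ℝ}

noncomputable def powerCfun (α γ κ : ℝ) : ℝ := ∫ u in Ioi 0, exp (-((κ * rateMean α u + γ) * u))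

theorem Cfun_power_eq (hα : 0 ≤ α) {a β lam : ℝ} (ha : 0 ≤ a) (hβ : 0 ≤ β) :
    Cfun a (fun x => lam * x ^ α + γ) β = powerCfun α γ (lam * a ^ α * β ^ α) := by
  have hb : Continuous fun x : ℝ => lam * x ^ α + γ :=
    ((continuous_rpow_const hα).const_mul lam).add continuous_const
  rw [Cfun_eq_integral_Ioi a β hb]
  refine setIntegral_congr_fun measurableSet_Ioi fun u hu => ?_
  have hpow : ∀ v ∈ uIcc 0 u, lam * (a * β * (1 - exp (-v))) ^ α + γ =
      lam * a ^ α * β ^ α * (1 - exp (-v)) ^ α + γ := fun v hv => by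
    rw [uIcc_of_le (le_of_lt hu)] at hv
    rw [mul_rpow (mul_nonneg ha hβ) (one_sub_exp_neg_nonneg hv.1), mul_rpow ha hβ]
    ring
  rw [intervalIntegral.integral_congr hpow, intervalIntegral.integral_add
    (((continuous_one_sub_exp_neg_rpow hα).intervalIntegrable 0 u).const_mul _)
    intervalIntegrable_const, intervalIntegral.integral_const_mul,
    integral_one_sub_exp_neg_rpow, intervalIntegral.integral_const, smul_eq_mul]
  ring_nf

lemma exp_neg_rateMean_le (hα : 0 ≤ α) (hγ : 0 ≤ γ) {κ₀ : ℝ} (hκ₀ : 0 ≤ κ₀) (hκ : κ₀ ≤ κ)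
    {u : ℝ} (hu : 0 ≤ u) :
    exp (-((κ * rateMean α u + γ) * u)) ≤
      exp (κ₀ * rateMean α 1) * exp (-(κ₀ * rateMean α 1) * u) := by
  rw [← exp_add, exp_le_exp]
  have hM := rateMean_nonneg (α := α) hu
  nlinarith [mul_le_mul_of_nonneg_left (mul_sub_one_le_mul_rateMean hα hu) hκ₀,
    mul_le_mul_of_nonneg_right hκ (mul_nonneg hu hM), mul_nonneg hγ hu]

lemma continuous_exp_neg_rateMean (hα : 0 ≤ α) :
    Continuous fun p : ℝ × ℝ => exp (-((p.1 * rateMean α p.2 + γ) * p.2)) := by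
  have := continuous_rateMean hα
  fun_prop

lemma integrableOn_exp_neg_rateMean (hα : 0 ≤ α) (hγ : 0 ≤ γ) (hκ : 0 < κ) :
    IntegrableOn (fun u => exp (-((κ * rateMean α u + γ) * u))) (Ioi 0) := by
  refine ((exp_neg_integrableOn_Ioi 0 (mul_pos hκ (rateMean_pos hα one_pos))).const_mul
    (exp (κ * rateMean α 1))).mono'
    ((continuous_exp_neg_rateMean hα).comp (Continuous.prodMk_right κ)).aestronglyMeasurable ?_
  filter_upwards [ae_restrict_mem measurableSet_Ioi] with u hu
  rw [norm_of_nonneg (exp_pos _).le]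
  exact exp_neg_rateMean_le hα hγ hκ.le le_rfl (le_of_lt hu)

lemma continuousOn_powerCfun (hα : 0 ≤ α) (hγ : 0 ≤ γ) : ContinuousOn (powerCfun α γ) (Ioi 0) := by
  intro κ hκ
  have hκ₀ : 0 < κ / 2 := half_pos hκ
  refine (ContinuousOn.continuousAt ?_ (Ioi_mem_nhds (half_lt_self hκ))).continuousWithinAt
  refine continuousOn_of_dominated (bound_integrable := (exp_neg_integrableOn_Ioi 0
    (mul_pos hκ₀ (rateMean_pos hα one_pos))).const_mul (exp (κ / 2 * rateMean α 1)))
    (fun κ' _ => ((continuous_exp_neg_rateMean hα).comp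
      (Continuous.prodMk_right κ')).aestronglyMeasurable) (fun κ' hκ' => ?_)
    (Eventually.of_forall fun u => ((continuous_exp_neg_rateMean hα).comp
      (Continuous.prodMk_left u)).continuousOn)
  filter_upwards [ae_restrict_mem measurableSet_Ioi] with u hu
  rw [norm_of_nonneg (exp_pos _).le]
  exact exp_neg_rateMean_le hα hγ hκ₀.le (le_of_lt hκ') (le_of_lt hu)

lemma powerCfun_le (hα : 0 ≤ α) (hγ : 0 ≤ γ) (hκ : 0 < κ) :
    powerCfun α γ κ ≤ exp (κ * rateMean α 1) * (κ * rateMean α 1)⁻¹ := by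
  have hk : 0 < κ * rateMean α 1 := mul_pos hκ (rateMean_pos hα one_pos)
  rw [← integral_exp_neg_mul_Ioi_zero hk, ← integral_const_mul]
  exact setIntegral_mono_on (integrableOn_exp_neg_rateMean hα hγ hκ)
    ((exp_neg_integrableOn_Ioi 0 hk).const_mul _) measurableSet_Ioi
    fun u hu => exp_neg_rateMean_le hα hγ hκ.le le_rfl (le_of_lt hu)

lemma inv_add_le_powerCfun (hα : 0 ≤ α) (hγ : 0 ≤ γ) (hκ : 0 < κ) :
    (κ + γ)⁻¹ ≤ powerCfun α γ κ := by
  have hk : 0 < κ + γ := by linarith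
  rw [← integral_exp_neg_mul_Ioi_zero hk]
  refine setIntegral_mono_on (exp_neg_integrableOn_Ioi 0 hk)
    (integrableOn_exp_neg_rateMean hα hγ hκ) measurableSet_Ioi fun u hu => ?_
  have hM := rateMean_le_one hα (le_of_lt hu)
  rw [exp_le_exp]
  nlinarith [mul_le_mul_of_nonneg_left hM hκ.le, mem_Ioi.1 hu]

end powerCfun

section fixedPoint

variable {α γ c : ℝ}

lemma mul_powerCfun_eq_integral {β : ℝ} (hβ : 0 < β) :
    β * powerCfun α γ (c * β ^ α) =
      ∫ w in Ioi 0, exp (-((c * β ^ α * rateMean α (β⁻¹ * w) + γ) * (β⁻¹ * w))) := by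
  rw [integral_comp_mul_left_Ioi (fun u => exp (-((c * β ^ α * rateMean α u + γ) * u))) 0
    (inv_pos.2 hβ), mul_zero, inv_inv, smul_eq_mul, powerCfun]

lemma integrableOn_exp_neg_rateMean_comp_mul (hα : 0 ≤ α) (hγ : 0 ≤ γ) (hc : 0 < c) {β : ℝ}
    (hβ : 0 < β) :
    IntegrableOn (fun w => exp (-((c * β ^ α * rateMean α (β⁻¹ * w) + γ) * (β⁻¹ * w))))
      (Ioi 0) :=
  (integrableOn_Ioi_comp_mul_left_iff (fun u => exp (-((c * β ^ α * rateMean α u + γ) * u))) 0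
    (inv_pos.2 hβ)).2
    (by simpa using integrableOn_exp_neg_rateMean hα hγ (mul_pos hc (rpow_pos_of_pos hβ α)))

lemma scaled_exponent_lt (hα : 0 ≤ α) (hα1 : α < 1) (hc : 0 < c) (hγ : 0 ≤ γ)
    {β₁ β₂ w : ℝ} (hβ₁ : 0 < β₁) (hβ : β₁ < β₂) (hw : 0 < w) :
    (c * β₂ ^ α * rateMean α (β₂⁻¹ * w) + γ) * (β₂⁻¹ * w) <
      (c * β₁ ^ α * rateMean α (β₁⁻¹ * w) + γ) * (β₁⁻¹ * w) := by
  have hβ₂ : 0 < β₂ := hβ₁.trans hβ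
  have hrw : ∀ β : ℝ, β ≠ 0 → ∀ m : ℝ,
      (c * β ^ α * m + γ) * (β⁻¹ * w) = (c * β ^ (α - 1) * m + γ * β⁻¹) * w := fun β hβ m => by
    rw [rpow_sub_one hβ]
    ring
  have hinv : β₂⁻¹ ≤ β₁⁻¹ := inv_anti₀ hβ₁ hβ.le
  rw [hrw β₂ hβ₂.ne', hrw β₁ hβ₁.ne']
  refine mul_lt_mul_of_pos_right (add_lt_add_of_lt_of_le ?_ (mul_le_mul_of_nonneg_left hinv hγ)) hw
  calc c * β₂ ^ (α - 1) * rateMean α (β₂⁻¹ * w)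
      < c * β₁ ^ (α - 1) * rateMean α (β₂⁻¹ * w) :=
        mul_lt_mul_of_pos_right (mul_lt_mul_of_pos_left
          (rpow_lt_rpow_of_neg hβ₁ hβ (by linarith)) hc) (rateMean_pos hα (by positivity))
    _ ≤ c * β₁ ^ (α - 1) * rateMean α (β₁⁻¹ * w) :=
        mul_le_mul_of_nonneg_left (monotoneOn_rateMean hα (mem_Ici.2 (by positivity))
          (mem_Ici.2 (by positivity))
          (mul_le_mul_of_nonneg_right hinv hw.le)) (by positivity)

theorem strictMonoOn_mul_powerCfun (hα : 0 ≤ α) (hα1 : α < 1) (hc : 0 < c) (hγ : 0 ≤ γ) :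
    StrictMonoOn (fun β => β * powerCfun α γ (c * β ^ α)) (Ioi 0) := by
  intro β₁ hβ₁ β₂ hβ₂ hβ
  simp only [mul_powerCfun_eq_integral hβ₁, mul_powerCfun_eq_integral hβ₂]
  exact setIntegral_lt_setIntegral measurableSet_Ioi (by simp)
    (integrableOn_exp_neg_rateMean_comp_mul hα hγ hc hβ₁)
    (integrableOn_exp_neg_rateMean_comp_mul hα hγ hc hβ₂)
    fun w hw => exp_lt_exp.2 (neg_lt_neg (scaled_exponent_lt hα hα1 hc hγ hβ₁ hβ hw))

lemma continuousOn_mul_powerCfun (hα : 0 ≤ α) (hγ : 0 ≤ γ) (hc : 0 < c) :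
    ContinuousOn (fun β => β * powerCfun α γ (c * β ^ α)) (Ioi 0) :=
  continuousOn_id.mul ((continuousOn_powerCfun hα hγ).comp
    ((continuous_rpow_const hα).const_mul c).continuousOn
    fun _ hβ => mul_pos hc (rpow_pos_of_pos hβ α))

lemma exists_mul_powerCfun_lt_one (hα : 0 ≤ α) (hα1 : α < 1) (hc : 0 < c) (hγ : 0 ≤ γ) :
    ∃ β, 0 < β ∧ β * powerCfun α γ (c * β ^ α) < 1 := by
  set m := rateMean α 1
  have hm : 0 < m := rateMean_pos hα one_pos
  have hlim : Tendsto (fun β : ℝ => β ^ (1 - α) * exp (c * β ^ α * m) * (c * m)⁻¹)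
      (𝓝[>] 0) (𝓝 0) := by
    have h1 := continuous_rpow_const (sub_nonneg.2 hα1.le)
    have h2 := continuous_rpow_const hα
    have hcont : Continuous fun β : ℝ => β ^ (1 - α) * exp (c * β ^ α * m) * (c * m)⁻¹ := by
      fun_prop
    simpa [zero_rpow (sub_ne_zero.2 hα1.ne')] using
      (hcont.tendsto 0).mono_left nhdsWithin_le_nhds
  obtain ⟨β, hβ1, hβ⟩ := ((hlim.eventually (gt_mem_nhds one_pos)).and self_mem_nhdsWithin).exists
  refine ⟨β, hβ, ?_⟩
  have hκ : 0 < c * β ^ α := mul_pos hc (rpow_pos_of_pos hβ α)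
  calc β * powerCfun α γ (c * β ^ α) ≤ β * (exp (c * β ^ α * m) * (c * β ^ α * m)⁻¹) :=
        mul_le_mul_of_nonneg_left (powerCfun_le hα hγ hκ) (le_of_lt hβ)
    _ = β ^ (1 - α) * exp (c * β ^ α * m) * (c * m)⁻¹ := by
        rw [rpow_sub hβ, rpow_one]
        field_simp
    _ < 1 := hβ1

lemma exists_one_lt_mul_powerCfun (hα : 0 ≤ α) (hα1 : α < 1) (hc : 0 < c) (hγ : 0 ≤ γ) :
    ∃ β, 0 < β ∧ 1 < β * powerCfun α γ (c * β ^ α) := by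
  have hlim : Tendsto (fun β : ℝ => c * β ^ (α - 1) + γ * β⁻¹) atTop (𝓝 0) := by
    have h := tendsto_rpow_neg_atTop (sub_pos.2 hα1)
    rw [neg_sub] at h
    simpa using (h.const_mul c).add (tendsto_inv_atTop_zero.const_mul γ)
  obtain ⟨β, hβ1, hβ⟩ :=
    ((hlim.eventually (gt_mem_nhds one_pos)).and (eventually_gt_atTop 0)).exists
  refine ⟨β, hβ, ?_⟩
  have hκ : 0 < c * β ^ α := mul_pos hc (rpow_pos_of_pos hβ α)
  have hsum : c * β ^ α + γ < β := by
    have : (c * β ^ (α - 1) + γ * β⁻¹) * β = c * β ^ α + γ := by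
      rw [rpow_sub_one hβ.ne']
      field_simp
    nlinarith
  calc 1 < β * (c * β ^ α + γ)⁻¹ := by
        rw [← div_eq_mul_inv, one_lt_div (by positivity)]
        exact hsum
    _ ≤ β * powerCfun α γ (c * β ^ α) :=
        mul_le_mul_of_nonneg_left (inv_add_le_powerCfun hα hγ hκ) (le_of_lt hβ)

end fixedPoint

/-- for the sub-linear power firing function `b(x) = λ x^α + γ`
with `λ > 0`, `0 < α < 1` and `γ ≥ 0`, there exists a unique `β > 0` solving
`β C(β) = 1`, i.e. a unique non-trivial invariant distribution. -/
theorem existsUnique_fixed_point_sublinear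
    (a lam α γ : ℝ) (ha : 0 < a) (hlam : 0 < lam)
    (hα : 0 < α) (hα1 : α < 1) (hγ : 0 ≤ γ) :
    ∃! β : ℝ, 0 < β ∧ β * Cfun a (fun x => lam * x ^ α + γ) β = 1 := by
  set c := lam * a ^ α
  have hc : 0 < c := mul_pos hlam (rpow_pos_of_pos ha α)
  have hC : ∀ β, 0 < β →
      β * Cfun a (fun x => lam * x ^ α + γ) β = β * powerCfun α γ (c * β ^ α) :=
    fun β hβ => by rw [Cfun_power_eq hα.le ha.le hβ.le]
  obtain ⟨β₁, hβ₁, h₁⟩ := exists_mul_powerCfun_lt_one hα.le hα1 hc hγ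
  obtain ⟨β₂, hβ₂, h₂⟩ := exists_one_lt_mul_powerCfun hα.le hα1 hc hγ
  have hpos : uIcc β₁ β₂ ⊆ Ioi 0 := fun β hβ => lt_of_lt_of_le (lt_min hβ₁ hβ₂) hβ.1
  obtain ⟨β, hβ, hβ1 : β * powerCfun α γ (c * β ^ α) = 1⟩ := intermediate_value_uIcc
    ((continuousOn_mul_powerCfun hα.le hγ hc).mono hpos) (mem_uIcc_of_le h₁.le h₂.le)
  refine ⟨β, ⟨hpos hβ, by rw [hC β (hpos hβ), hβ1]⟩, fun β' ⟨hβ', h'⟩ => ?_⟩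
  exact (strictMonoOn_mul_powerCfun hα.le hα1 hc hγ).injOn hβ' (hpos hβ)
    (by rw [← hC β' hβ', h', hβ1])
end
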